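/- arXiv:1206.0492 — 9 statements merged into one kernel-verified Lean document; each statement's English description precedes it below -/
import Mathlib

section
/- Let {N_k} be defined by N₁ = 1 and N_{k+1} = 3N_k + 2N_k², and let S be the weighted unilateral forward shift on ℓ² with weights w₁ = 1, w_i = 1/2 for N_k < i ≤ 3N_k, and w_i = 2^{1/N_k} for 3N_k < i ≤ N_{k+1} (k = 1, 2, ...), i.e. S(x₁, x₂, ...) = (0, w₁x₁, w₂x₂, ...). Then S is a bounded operator of class C_{0·}: for every x ∈ ℓ² and every ε > 0 there exists n ∈ ℕ with ‖Sⁿx‖ < ε. -/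
open Filter Classical
open scoped ENNReal

/-- The sequence `N₁ = 1`, `N_{k+1} = 3N_k + 2N_k²` (here `Nseq k = N_{k+1}`). -/
def Nseq : ℕ → ℕ
  | 0 => 1
  | k + 1 => 3 * Nseq k + 2 * (Nseq k) ^ 2

/-- The weights `w₁ = 1`, `w_i = 1/2` for `N_k < i ≤ 3N_k`, and `w_i = 2^{1/N_k}` for
`3N_k < i ≤ N_{k+1}` (indices `i ≥ 1` as in the paper). -/
noncomputable def wseq (i : ℕ) : ℝ :=
  if ∃ k : ℕ, Nseq k < i ∧ i ≤ 3 * Nseq k then 1 / 2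
  else if h : ∃ k : ℕ, 3 * Nseq k < i ∧ i ≤ Nseq (k + 1) then
    (2 : ℝ) ^ ((1 : ℝ) / (Nseq h.choose : ℝ))
  else 1

lemma Nseq_pos (k : ℕ) : 0 < Nseq k := by
  induction k with
  | zero => simp [Nseq]
  | succ k ih => simp only [Nseq]; positivity

lemma Nseq_ge (k : ℕ) : k + 1 ≤ Nseq k := by
  induction k with
  | zero => simp [Nseq]
  | succ k ih =>
    have h := Nseq_pos k
    simp only [Nseq]; nlinarith

lemma Nseq_strictMono : StrictMono Nseq := by
  apply strictMono_nat_of_lt_succ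
  intro k
  have h := Nseq_pos k
  simp only [Nseq]; nlinarith

lemma wseq_pos (i : ℕ) : 0 < wseq i := by
  unfold wseq
  split_ifs with h1 h2
  · norm_num
  · exact Real.rpow_pos_of_pos (by norm_num) _
  · norm_num

lemma one_le_two_rpow {r : ℝ} (hr : 0 ≤ r) : (1:ℝ) ≤ (2:ℝ) ^ r :=
  Real.one_le_rpow one_le_two hr

lemma wseq_le_two (i : ℕ) : wseq i ≤ 2 := by
  unfold wseq
  split_ifs with h1 h2
  · norm_num
  · have hN := Nseq_pos h2.choose
    have h1N : (1:ℝ) / (Nseq h2.choose : ℝ) ≤ 1 := by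
      rw [div_le_one (by exact_mod_cast hN)]
      exact_mod_cast hN
    calc (2:ℝ) ^ ((1:ℝ) / (Nseq h2.choose : ℝ)) ≤ (2:ℝ) ^ (1:ℝ) :=
          Real.rpow_le_rpow_of_exponent_le one_le_two h1N
      _ = 2 := Real.rpow_one 2
  · norm_num

lemma wseq_half {k i : ℕ} (h1 : Nseq k < i) (h2 : i ≤ 3 * Nseq k) : wseq i = 1/2 := by
  unfold wseq
  rw [if_pos ⟨k, h1, h2⟩]

lemma wseq_le {k i : ℕ} (h : Nseq k < i) :
    wseq i ≤ (2:ℝ) ^ ((1:ℝ) / (Nseq k : ℝ)) := by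
  have hNk : (0:ℝ) < (Nseq k : ℝ) := by exact_mod_cast Nseq_pos k
  have hexp : (0:ℝ) ≤ (1:ℝ) / (Nseq k : ℝ) := by positivity
  unfold wseq
  split_ifs with h1 h2
  · linarith [one_le_two_rpow hexp]
  · obtain ⟨hm1, hm2⟩ := h2.choose_spec
    have hkm : k ≤ h2.choose := by
      by_contra hc
      push_neg at hc
      have h3 : Nseq (h2.choose + 1) ≤ Nseq k := Nseq_strictMono.monotone hc
      omega
    have hNm : Nseq k ≤ Nseq h2.choose := Nseq_strictMono.monotone hkm
    have hNm' : (0:ℝ) < (Nseq h2.choose : ℝ) := by exact_mod_cast Nseq_pos h2.choose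
    apply Real.rpow_le_rpow_of_exponent_le one_le_two
    apply div_le_div_of_nonneg_left (by norm_num) hNk
    exact_mod_cast hNm
  · exact one_le_two_rpow hexp

/-! ### The shift -/

noncomputable def shiftFun (x : ℕ → ℂ) : ℕ → ℂ
  | 0 => 0
  | (i+1) => (wseq (i+1) : ℂ) * x i

lemma shiftFun_zero (x : ℕ → ℂ) : shiftFun x 0 = 0 := rfl

lemma shiftFun_succ (x : ℕ → ℂ) (i : ℕ) : shiftFun x (i+1) = (wseq (i+1) : ℂ) * x i := rfl

lemma norm_shiftFun_succ_sq (x : ℕ → ℂ) (i : ℕ) :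
    ‖shiftFun x (i+1)‖ ^ 2 = (wseq (i+1)) ^ 2 * ‖x i‖ ^ 2 := by
  rw [shiftFun_succ, norm_mul, mul_pow, Complex.norm_real,
    Real.norm_eq_abs, abs_of_pos (wseq_pos _)]

lemma rpow_toReal_two (x : ℝ) : x ^ ((2:ℝ≥0∞).toReal) = x ^ 2 := by
  rw [ENNReal.toReal_ofNat, show (2:ℝ) = ((2:ℕ):ℝ) by norm_num, Real.rpow_natCast]

lemma sq_summable (f : lp (fun _ : ℕ => ℂ) 2) : Summable fun i => ‖f i‖ ^ 2 := by
  have h := (lp.memℓp f).summable (p := 2) (by norm_num)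
  simpa only [rpow_toReal_two] using h

lemma norm_sq_eq (f : lp (fun _ : ℕ => ℂ) 2) : ‖f‖ ^ 2 = ∑' i, ‖f i‖ ^ 2 := by
  have h := lp.norm_rpow_eq_tsum (p := 2) (by norm_num) f
  simpa only [rpow_toReal_two] using h

lemma memℓp_two_of_sq {f : ℕ → ℂ} (h : Summable fun i => ‖f i‖ ^ 2) :
    Memℓp f 2 := by
  apply memℓp_gen
  simpa only [rpow_toReal_two] using h

lemma wseq_sq_le_four (i : ℕ) : (wseq i) ^ 2 ≤ 4 := by
  have h1 := wseq_le_two i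
  have h2 := (wseq_pos i).le
  nlinarith

lemma shift_memℓp (x : lp (fun _ : ℕ => ℂ) 2) : Memℓp (shiftFun ⇑x) 2 := by
  apply memℓp_two_of_sq
  rw [← summable_nat_add_iff 1]
  apply Summable.of_nonneg_of_le (fun i => by positivity)
    (fun i => ?_) ((sq_summable x).mul_left 4)
  rw [norm_shiftFun_succ_sq]
  have h2 : (0:ℝ) ≤ ‖x i‖ ^ 2 := by positivity
  nlinarith [wseq_sq_le_four (i+1)]

noncomputable def shiftLp (x : lp (fun _ : ℕ => ℂ) 2) : lp (fun _ : ℕ => ℂ) 2 :=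
  ⟨shiftFun ⇑x, shift_memℓp x⟩

lemma shiftLp_coe (x : lp (fun _ : ℕ => ℂ) 2) : ⇑(shiftLp x) = shiftFun ⇑x := rfl

lemma shiftLp_norm_sq (x : lp (fun _ : ℕ => ℂ) 2) :
    ‖shiftLp x‖ ^ 2 = ∑' i, (wseq (i+1)) ^ 2 * ‖x i‖ ^ 2 := by
  rw [norm_sq_eq]
  have h0 : Summable fun i => ‖(shiftLp x) i‖ ^ 2 := sq_summable (shiftLp x)
  rw [Summable.tsum_eq_zero_add h0]
  have hz : ‖(shiftLp x) 0‖ ^ 2 = 0 := by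
    rw [shiftLp_coe, shiftFun_zero, norm_zero]; ring
  rw [hz, zero_add]
  apply tsum_congr
  intro i
  rw [shiftLp_coe, norm_shiftFun_succ_sq]

noncomputable def SL : lp (fun _ : ℕ => ℂ) 2 →ₗ[ℂ] lp (fun _ : ℕ => ℂ) 2 where
  toFun := shiftLp
  map_add' x y := by
    apply lp.ext
    funext i
    have h : ⇑(x + y) = ⇑x + ⇑y := lp.coeFn_add x y
    have h2 : ⇑(shiftLp x + shiftLp y) = ⇑(shiftLp x) + ⇑(shiftLp y) := lp.coeFn_add _ _
    rw [shiftLp_coe, h2]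
    show shiftFun (⇑(x+y)) i = shiftFun ⇑x i + shiftFun ⇑y i
    cases i with
    | zero => simp [shiftFun]
    | succ i =>
      simp only [shiftFun, h, Pi.add_apply]
      ring
  map_smul' c x := by
    apply lp.ext
    funext i
    have h : ⇑(c • x) = c • ⇑x := lp.coeFn_smul c x
    have h2 : ⇑(c • shiftLp x) = c • ⇑(shiftLp x) := lp.coeFn_smul c _
    rw [RingHom.id_apply, shiftLp_coe, h2]
    show shiftFun (⇑(c • x)) i = (c • (shiftFun ⇑x ∘ id)) i
    cases i with
    | zero => simp [shiftFun]
    | succ i =>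
      simp only [shiftFun, h, Pi.smul_apply, Function.comp, id, smul_eq_mul]
      ring

lemma SL_bound (x : lp (fun _ : ℕ => ℂ) 2) : ‖SL x‖ ≤ 2 * ‖x‖ := by
  have hb : ‖SL x‖ ^ 2 ≤ (2 * ‖x‖) ^ 2 := by
    show ‖shiftLp x‖ ^ 2 ≤ (2 * ‖x‖) ^ 2
    rw [shiftLp_norm_sq]
    have hsum : ∑' i, (wseq (i+1)) ^ 2 * ‖x i‖ ^ 2 ≤ ∑' (i:ℕ), 4 * ‖x i‖ ^ 2 := by
      apply Summable.tsum_le_tsum _ _ ((sq_summable x).mul_left 4)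
      · intro i
        have h2 : (0:ℝ) ≤ ‖x i‖ ^ 2 := by positivity
        nlinarith [wseq_sq_le_four (i+1)]
      · apply Summable.of_nonneg_of_le (fun i => by positivity)
          (fun i => ?_) ((sq_summable x).mul_left 4)
        have h2 : (0:ℝ) ≤ ‖x i‖ ^ 2 := by positivity
        nlinarith [wseq_sq_le_four (i+1)]
    have heq : ∑' (i:ℕ), 4 * ‖x i‖ ^ 2 = (2*‖x‖)^2 := by
      rw [tsum_mul_left, ← norm_sq_eq]; ring
    linarith
  exact le_of_pow_le_pow_left₀ (by norm_num) (by positivity) hb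

noncomputable def Sop : lp (fun _ : ℕ => ℂ) 2 →L[ℂ] lp (fun _ : ℕ => ℂ) 2 :=
  LinearMap.mkContinuous SL 2 SL_bound

lemma Sop_coe (x : lp (fun _ : ℕ => ℂ) 2) : ⇑(Sop x) = shiftFun ⇑x := rfl

/-! ### products of weights -/

noncomputable def P (n i : ℕ) : ℝ := ∏ j ∈ Finset.range n, wseq (i + j + 1)

lemma P_pos (n i : ℕ) : 0 < P n i :=
  Finset.prod_pos fun _ _ => wseq_pos _

lemma P_le (n i : ℕ) : P n i ≤ 2 ^ n := by
  calc P n i ≤ ∏ _j ∈ Finset.range n, (2:ℝ) :=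
        Finset.prod_le_prod (fun j _ => (wseq_pos _).le) (fun j _ => wseq_le_two _)
    _ = 2 ^ n := by rw [Finset.prod_const, Finset.card_range]

lemma P_succ (n i : ℕ) : P (n+1) i = wseq (i+1) * P n (i+1) := by
  unfold P
  rw [Finset.prod_range_succ']
  simp only [add_zero]
  rw [mul_comm]
  congr 1
  apply Finset.prod_congr rfl
  intro j _
  congr 1
  omega

lemma summable_P (n : ℕ) (y : lp (fun _ : ℕ => ℂ) 2) :
    Summable fun i => (P n i) ^ 2 * ‖y i‖ ^ 2 := by
  apply Summable.of_nonneg_of_le (fun i => by positivity)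
    (fun i => ?_) ((sq_summable y).mul_left ((2^n)^2))
  have h1 : (P n i)^2 ≤ (2^n)^2 := by
    have := P_le n i; have := (P_pos n i).le; nlinarith
  have h2 : (0:ℝ) ≤ ‖y i‖ ^ 2 := by positivity
  nlinarith

lemma norm_pow_apply (n : ℕ) (x : lp (fun _ : ℕ => ℂ) 2) :
    ‖(Sop ^ n) x‖ ^ 2 = ∑' i, (P n i) ^ 2 * ‖x i‖ ^ 2 := by
  induction n generalizing x with
  | zero =>
    simp only [pow_zero, ContinuousLinearMap.one_apply]
    rw [norm_sq_eq]
    apply tsum_congr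
    intro i
    simp [P]
  | succ n ih =>
    have hpow : (Sop ^ (n+1)) x = (Sop ^ n) (Sop x) := by
      rw [pow_succ, ContinuousLinearMap.mul_apply]
    rw [hpow, ih]
    have hsum : Summable fun i => (P n i) ^ 2 * ‖(Sop x) i‖ ^ 2 := summable_P n (Sop x)
    rw [Summable.tsum_eq_zero_add hsum]
    have h0 : (P n 0) ^ 2 * ‖(Sop x) 0‖ ^ 2 = 0 := by
      have hz : (Sop x) 0 = 0 := by rw [Sop_coe]; rfl
      rw [hz]; simp
    rw [h0, zero_add]
    apply tsum_congr
    intro i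
    have h1 : (Sop x) (i+1) = (wseq (i+1) : ℂ) * x i := by rw [Sop_coe]; rfl
    rw [h1, P_succ, norm_mul, Complex.norm_real, Real.norm_eq_abs,
      abs_of_pos (wseq_pos _)]
    ring

/-! ### product estimates -/

lemma prod_bound_small {k i : ℕ} (hi : i ≤ Nseq k) :
    P (3 * Nseq k) i ≤ (1/2 : ℝ) ^ (Nseq k) := by
  have hNpos := Nseq_pos k
  set N := Nseq k with hN
  set A : Finset ℕ := Finset.Ico (N - i) (3 * N - i) with hA
  have hsub : A ⊆ Finset.range (3 * N) := by
    intro j hj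
    rw [hA, Finset.mem_Ico] at hj
    rw [Finset.mem_range]
    omega
  have hcardA : A.card = 2 * N := by
    rw [hA, Nat.card_Ico]; omega
  have hcard_sdiff : (Finset.range (3 * N) \ A).card = N := by
    rw [Finset.card_sdiff_of_subset hsub, Finset.card_range, hcardA]; omega
  have hsplit : P (3 * N) i
      = (∏ j ∈ Finset.range (3 * N) \ A, wseq (i + j + 1)) *
        (∏ j ∈ A, wseq (i + j + 1)) := by
    rw [P, ← Finset.prod_sdiff hsub]
  have hA_prod : (∏ j ∈ A, wseq (i + j + 1)) = (1/2 : ℝ) ^ (2 * N) := by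
    rw [Finset.prod_congr rfl (fun j hj => ?_), Finset.prod_const, hcardA]
    rw [hA, Finset.mem_Ico] at hj
    exact wseq_half (k := k) (by omega) (by omega)
  have hsdiff_prod : (∏ j ∈ Finset.range (3 * N) \ A, wseq (i + j + 1)) ≤ 2 ^ N := by
    calc (∏ j ∈ Finset.range (3 * N) \ A, wseq (i + j + 1))
        ≤ ∏ _j ∈ Finset.range (3 * N) \ A, (2:ℝ) :=
          Finset.prod_le_prod (fun j _ => (wseq_pos _).le) (fun j _ => wseq_le_two _)
      _ = 2 ^ N := by rw [Finset.prod_const, hcard_sdiff]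
  calc P (3 * N) i
      = (∏ j ∈ Finset.range (3 * N) \ A, wseq (i + j + 1)) * (1/2:ℝ) ^ (2*N) := by
        rw [hsplit, hA_prod]
    _ ≤ 2 ^ N * (1/2:ℝ) ^ (2*N) :=
        mul_le_mul_of_nonneg_right hsdiff_prod (by positivity)
    _ = (1/2:ℝ) ^ N := by
        rw [pow_mul]
        rw [show ((1:ℝ)/2)^2 = 1/4 by norm_num, ← mul_pow]
        norm_num

lemma prod_bound_tail {k i : ℕ} (hi : Nseq k ≤ i) :
    P (3 * Nseq k) i ≤ 8 := by
  have hNpos := Nseq_pos k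
  set N := Nseq k with hN
  have hNR : (0:ℝ) < (N:ℝ) := by exact_mod_cast hNpos
  have hstep : ∀ j ∈ Finset.range (3 * N), wseq (i + j + 1) ≤ (2:ℝ) ^ ((1:ℝ)/(N:ℝ)) := by
    intro j _
    exact wseq_le (k := k) (by omega)
  calc P (3 * N) i
      ≤ ∏ _j ∈ Finset.range (3 * N), (2:ℝ) ^ ((1:ℝ)/(N:ℝ)) :=
        Finset.prod_le_prod (fun j _ => (wseq_pos _).le) hstep
    _ = ((2:ℝ) ^ ((1:ℝ)/(N:ℝ))) ^ (3 * N) := by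
        rw [Finset.prod_const, Finset.card_range]
    _ = (2:ℝ) ^ (((1:ℝ)/(N:ℝ)) * ((3 * N : ℕ) : ℝ)) := by
        rw [← Real.rpow_natCast ((2:ℝ) ^ ((1:ℝ)/(N:ℝ))) (3 * N), ← Real.rpow_mul (by norm_num)]
    _ = (2:ℝ) ^ (3:ℝ) := by
        congr 1
        push_cast
        field_simp
    _ = 8 := by
        rw [show (3:ℝ) = ((3:ℕ):ℝ) by norm_num, Real.rpow_natCast]
        norm_num

/-! ### Main theorem -/

lemma key_bound (x : lp (fun _ : ℕ => ℂ) 2) (M : ℕ) :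
    ‖(Sop ^ (3 * Nseq M)) x‖ ^ 2
      ≤ ((1:ℝ)/2) ^ (Nseq M) * ‖x‖ ^ 2 + 64 * ∑' i, ‖x (i + Nseq M)‖ ^ 2 := by
  have hxsum := sq_summable x
  set N := Nseq M with hNdef
  rw [norm_pow_apply]
  have hsum : Summable fun i => (P (3*N) i) ^ 2 * ‖x i‖ ^ 2 := summable_P (3*N) x
  rw [← Summable.sum_add_tsum_nat_add N hsum]
  have hpart1 : ∑ i ∈ Finset.range N, (P (3*N) i) ^ 2 * ‖x i‖ ^ 2
      ≤ ((1:ℝ)/2) ^ N * ‖x‖ ^ 2 := by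
    have hb : ∀ i ∈ Finset.range N, (P (3*N) i) ^ 2 * ‖x i‖ ^ 2
        ≤ ((1:ℝ)/2) ^ N * ‖x i‖ ^ 2 := by
      intro i hi
      rw [Finset.mem_range] at hi
      have hp : P (3*N) i ≤ ((1:ℝ)/2) ^ N := prod_bound_small (k := M) (by omega)
      have hp0 := (P_pos (3*N) i).le
      have hhle : ((1:ℝ)/2) ^ N ≤ 1 := by
        apply pow_le_one₀ <;> norm_num
      have hx0 : (0:ℝ) ≤ ‖x i‖ ^ 2 := by positivity
      have : (P (3*N) i) ^ 2 ≤ ((1:ℝ)/2) ^ N := by nlinarith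
      nlinarith
    calc ∑ i ∈ Finset.range N, (P (3*N) i) ^ 2 * ‖x i‖ ^ 2
        ≤ ∑ i ∈ Finset.range N, ((1:ℝ)/2) ^ N * ‖x i‖ ^ 2 := Finset.sum_le_sum hb
      _ = ((1:ℝ)/2) ^ N * ∑ i ∈ Finset.range N, ‖x i‖ ^ 2 := by rw [Finset.mul_sum]
      _ ≤ ((1:ℝ)/2) ^ N * ‖x‖ ^ 2 := by
          apply mul_le_mul_of_nonneg_left _ (by positivity)
          rw [norm_sq_eq]
          exact Summable.sum_le_tsum _ (fun i _ => by positivity) hxsum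
  have hpart2 : ∑' i, (P (3*N) (i + N)) ^ 2 * ‖x (i + N)‖ ^ 2
      ≤ 64 * ∑' i, ‖x (i + N)‖ ^ 2 := by
    have hb : ∀ i : ℕ, (P (3*N) (i + N)) ^ 2 * ‖x (i + N)‖ ^ 2 ≤ 64 * ‖x (i + N)‖ ^ 2 := by
      intro i
      have hp : P (3*N) (i + N) ≤ 8 := prod_bound_tail (k := M) (by omega)
      have hp0 := (P_pos (3*N) (i+N)).le
      have hx0 : (0:ℝ) ≤ ‖x (i+N)‖ ^ 2 := by positivity
      have hsq : (P (3*N) (i+N)) ^ 2 ≤ 64 := by nlinarith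
      exact mul_le_mul_of_nonneg_right hsq hx0
    have hs1 : Summable fun i => (P (3*N) (i + N)) ^ 2 * ‖x (i + N)‖ ^ 2 :=
      (summable_nat_add_iff (f := fun i => (P (3*N) i) ^ 2 * ‖x i‖ ^ 2) N).2 hsum
    have hs2 : Summable fun i => (64:ℝ) * ‖x (i + N)‖ ^ 2 :=
      ((summable_nat_add_iff (f := fun i => ‖x i‖ ^ 2) N).2 hxsum).mul_left 64
    calc ∑' i, (P (3*N) (i + N)) ^ 2 * ‖x (i + N)‖ ^ 2
        ≤ ∑' i, (64:ℝ) * ‖x (i + N)‖ ^ 2 := Summable.tsum_le_tsum hb hs1 hs2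
      _ = 64 * ∑' i, ‖x (i + N)‖ ^ 2 := tsum_mul_left
  linarith

/-- The weighted unilateral forward shift `S` on `ℓ²` with the weights `wseq`
(i.e. `S(x₁,x₂,…) = (0, w₁x₁, w₂x₂, …)`) exists as a bounded operator and is of class `C₀.`:
for every `x ∈ ℓ²` and `ε > 0` there is `n` with `‖Sⁿx‖ < ε`. -/
theorem stmt_1 :
    ∃ S : lp (fun _ : ℕ => ℂ) 2 →L[ℂ] lp (fun _ : ℕ => ℂ) 2,
      (∀ x : lp (fun _ : ℕ => ℂ) 2, (S x) 0 = 0 ∧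
        ∀ i : ℕ, (S x) (i + 1) = (wseq (i + 1) : ℂ) * x i) ∧
      (∀ x : lp (fun _ : ℕ => ℂ) 2, ∀ ε : ℝ, 0 < ε → ∃ n : ℕ, ‖(S ^ n) x‖ < ε) := by
  refine ⟨Sop, fun x => ⟨by rw [Sop_coe]; rfl, fun i => by rw [Sop_coe]; rfl⟩, ?_⟩
  intro x ε hε
  have htail : Tendsto (fun N : ℕ => ∑' i, ‖x (i + N)‖ ^ 2) atTop (nhds 0) :=
    tendsto_sum_nat_add (f := fun i => ‖x i‖ ^ 2)
  have hhalf : Tendsto (fun N : ℕ => ((1:ℝ)/2) ^ N * ‖x‖ ^ 2) atTop (nhds 0) := by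
    have h := tendsto_pow_atTop_nhds_zero_of_lt_one (by norm_num : (0:ℝ) ≤ 1/2)
      (by norm_num : (1:ℝ)/2 < 1)
    simpa using h.mul_const (‖x‖^2)
  have h1 : ∀ᶠ N : ℕ in atTop, ((1:ℝ)/2) ^ N * ‖x‖ ^ 2 < ε^2/2 :=
    hhalf.eventually_lt_const (by positivity)
  have h2 : ∀ᶠ N : ℕ in atTop, 64 * ∑' i, ‖x (i + N)‖ ^ 2 < ε^2/2 := by
    have h := htail.const_mul (64:ℝ)
    rw [mul_zero] at h
    exact h.eventually_lt_const (by positivity)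
  obtain ⟨M, hM⟩ := eventually_atTop.1 (h1.and h2)
  obtain ⟨hc1, hc2⟩ := hM (Nseq M) (by have := Nseq_ge M; omega)
  refine ⟨3 * Nseq M, ?_⟩
  have hkey : ‖(Sop ^ (3 * Nseq M)) x‖ ^ 2 < ε ^ 2 := by
    have h := key_bound x M
    linarith
  have h0 : (0:ℝ) ≤ ‖(Sop ^ (3 * Nseq M)) x‖ := norm_nonneg _
  nlinarith
end

section
/- A power-bounded operator T on a complex separable Hilbert space H is of class C_{·1} if and only if M(T) is dense in H. -/
/-!
If `T` is of class `C·₁`, let `L` be a weak-operator limit, along an ultrafilter, of the Cesàro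
means `n⁻¹ ∑_{k<n} Tᵏ T*ᵏ`. Telescoping gives `T L T* = L`, so `L z` has the bounded backward
sequence `L (T*ⁿ z)`; and `re ⟪L w, w⟫` is a limit of means of `‖T*ᵏ w‖²`, hence positive for
`w ≠ 0`, so no nonzero vector is orthogonal to the range of `L`.

Conversely, if `m ∈ M(T)` has the backward sequence `(xₙ)`, then `⟪x, m⟫ = ⟪T*ⁿ x, xₙ⟫`, so
`‖T*ⁿ x‖ ≥ |⟪x, m⟫| / sup ‖xₙ‖`, and density of `M(T)` provides an `m` with `⟪x, m⟫ ≠ 0`.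
-/

open Filter ContinuousLinearMap

/-- `MT T` is the set of origins of bounded backward sequences of `T`. -/
def MT {H : Type*} [NormedAddCommGroup H] [InnerProductSpace ℂ H]
    (T : H →L[ℂ] H) : Set H :=
  {x : H | ∃ xs : ℕ → H, xs 0 = x ∧ (∀ n : ℕ, T (xs (n + 1)) = xs n) ∧
    ∃ C : ℝ, ∀ n : ℕ, ‖xs n‖ ≤ C}

open Topology
open scoped InnerProductSpace

theorem Ultrafilter.exists_tendsto_of_norm_le {ι F : Type*} [NormedAddCommGroup F] [ProperSpace F]
    (U : Ultrafilter ι) {f : ι → F} {M : ℝ} (hf : ∀ i, ‖f i‖ ≤ M) :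
    ∃ a, Tendsto f U (𝓝 a) := by
  obtain ⟨a, -, ha⟩ := (isCompact_closedBall (0 : F) M).ultrafilter_le_nhds (U.map f) <|
    le_principal_iff.2 <| eventually_map.2 <| .of_forall fun i => mem_closedBall_zero_iff.2 (hf i)
  exact ⟨a, ha⟩

theorem Filter.eventually_lt_cesaro {a : ℕ → ℝ} {c c' : ℝ} (hc : c' < c)
    (h : ∀ᶠ k in atTop, c ≤ a k) :
    ∀ᶠ n : ℕ in atTop, c' < (n : ℝ)⁻¹ * ∑ k ∈ Finset.range n, a k := by
  have hmin : Tendsto (fun k => min (a k) c) atTop (𝓝 c) :=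
    tendsto_const_nhds.congr' (h.mono fun k hk => (min_eq_right hk).symm)
  filter_upwards [hmin.cesaro.eventually (lt_mem_nhds hc)] with n hn
  exact hn.trans_le (by gcongr with k; exact min_le_left _ _)

theorem Filter.liminf_pos_of_forall_le {f : ℕ → ℝ} {c : ℝ} (hc : 0 < c)
    (hbdd : IsBoundedUnder (· ≤ ·) atTop f) (h : ∀ n, c ≤ f n) : 0 < liminf f atTop :=
  hc.trans_le (le_liminf_of_le hbdd.isCoboundedUnder_ge (Eventually.of_forall h))

theorem Dense.exists_inner_ne_zero {𝕜 E : Type*} [RCLike 𝕜] [NormedAddCommGroup E]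
    [InnerProductSpace 𝕜 E] {s : Set E} (hs : Dense s) {x : E} (hx : x ≠ 0) :
    ∃ m ∈ s, ⟪x, m⟫_𝕜 ≠ 0 := by
  by_contra! h
  have hclosed : IsClosed {m : E | ⟪x, m⟫_𝕜 = 0} := isClosed_eq (by fun_prop) continuous_const
  exact hx (inner_self_eq_zero.1 (closure_minimal h hclosed (hs x)))

namespace ContinuousLinearMap

variable {𝕜 E : Type*} [RCLike 𝕜] [NormedAddCommGroup E] [InnerProductSpace 𝕜 E] [CompleteSpace E]

theorem adjoint_pow (T : E →L[𝕜] E) (n : ℕ) : adjoint (T ^ n) = adjoint T ^ n := by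
  simp only [← star_eq_adjoint, star_pow]

theorem norm_adjoint_pow (T : E →L[𝕜] E) (n : ℕ) : ‖adjoint T ^ n‖ = ‖T ^ n‖ := by
  rw [← adjoint_pow, LinearIsometryEquiv.norm_map]

theorem norm_adjoint_pow_apply_le {T : E →L[𝕜] E} {C : ℝ} (hC : ∀ n, ‖T ^ n‖ ≤ C) (n : ℕ)
    (x : E) : ‖(adjoint T ^ n) x‖ ≤ C * ‖x‖ :=
  (adjoint T ^ n).le_of_opNorm_le ((norm_adjoint_pow T n).trans_le (hC n)) x

theorem exists_tendsto_inner_of_norm_le {ι : Type*} (U : Ultrafilter ι) (A : ι → E →L[𝕜] E)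
    {M : ℝ} (hA : ∀ i, ‖A i‖ ≤ M) :
    ∃ L : E →L[𝕜] E, ∀ x y, Tendsto (fun i => ⟪A i x, y⟫_𝕜) U (𝓝 ⟪L x, y⟫_𝕜) := by
  have hM : 0 ≤ M := (norm_nonneg _).trans (hA (U.nonempty_of_mem univ_mem).some)
  have bound : ∀ x y i, ‖⟪A i x, y⟫_𝕜‖ ≤ M * ‖x‖ * ‖y‖ := fun x y i =>
    (norm_inner_le_norm _ _).trans <| by gcongr; exact (A i).le_of_opNorm_le (hA i) x
  choose φ hφ using fun x y => U.exists_tendsto_of_norm_le (bound x y)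
  have hφ_norm : ∀ x y, ‖φ x y‖ ≤ M * ‖x‖ * ‖y‖ := fun x y =>
    le_of_tendsto (hφ x y).norm (Eventually.of_forall (bound x y))
  let ℓ (x : E) : StrongDual 𝕜 E :=
    (linearMapOfTendsto (φ x) (fun i => (innerSL 𝕜 (A i x)).toLinearMap)
      (tendsto_pi_nhds.2 (hφ x))).mkContinuous (M * ‖x‖) (hφ_norm x)
  let L₀ (x : E) : E := (InnerProductSpace.toDual 𝕜 E).symm (ℓ x)
  have inner_L₀ : ∀ x y, ⟪L₀ x, y⟫_𝕜 = φ x y := fun x y =>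
    InnerProductSpace.toDual_symm_apply
  have norm_L₀ : ∀ x, ‖L₀ x‖ ≤ M * ‖x‖ := fun x => by
    rw [LinearIsometryEquiv.norm_map]
    exact LinearMap.mkContinuous_norm_le _ (by positivity) _
  let L : E →ₗ[𝕜] E :=
    { toFun := L₀
      map_add' := fun x x' => ext_inner_right 𝕜 fun y => by
        rw [inner_add_left, inner_L₀, inner_L₀, inner_L₀]
        refine tendsto_nhds_unique (hφ (x + x') y) ?_
        simpa only [map_add, inner_add_left] using (hφ x y).add (hφ x' y)
      map_smul' := fun c x => ext_inner_right 𝕜 fun y => by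
        rw [inner_smul_left, inner_L₀, inner_L₀]
        refine tendsto_nhds_unique (hφ (c • x) y) ?_
        simpa only [map_smul, inner_smul_left, RingHom.id_apply] using
          (hφ x y).const_mul (starRingEnd 𝕜 c) }
  exact ⟨L.mkContinuous M norm_L₀, fun x y => inner_L₀ x y ▸ hφ x y⟩

theorem dense_range_of_inner_apply_self_ne_zero {L : E →L[𝕜] E}
    (hL : ∀ w, w ≠ 0 → ⟪L w, w⟫_𝕜 ≠ 0) : Dense (Set.range L) := by
  change Dense (LinearMap.range (L : E →ₗ[𝕜] E) : Set E)
  rw [Submodule.dense_iff_topologicalClosure_eq_top, Submodule.topologicalClosure_eq_top_iff,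
    Submodule.eq_bot_iff]
  intro w hw
  by_contra hw0
  exact hL w hw0 <|
    Submodule.inner_right_of_mem_orthogonal (LinearMap.mem_range_self (L : E →ₗ[𝕜] E) w) hw

theorem mul_mul_adjoint_eq_of_tendsto_inner {ι : Type*} {l : Filter ι} [l.NeBot]
    {A : ι → E →L[𝕜] E} {L T : E →L[𝕜] E}
    (hL : ∀ x y, Tendsto (fun i => ⟪A i x, y⟫_𝕜) l (𝓝 ⟪L x, y⟫_𝕜))
    (hA : Tendsto (fun i => T * A i * adjoint T - A i) l (𝓝 0)) :
    T * L * adjoint T = L := by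
  ext1 x
  refine ext_inner_right 𝕜 fun y =>
    tendsto_nhds_unique (f := fun i => ⟪A i (adjoint T x), adjoint T y⟫_𝕜) (l := l) ?_ ?_
  · simpa only [mul_apply_eq_comp, ← adjoint_inner_right] using hL (adjoint T x) (adjoint T y)
  · have h0 : Tendsto (fun i => ⟪(T * A i * adjoint T - A i) x, y⟫_𝕜) l (𝓝 0) := by
      simpa [Function.comp_def] using
        ((continuous_eval_const x).inner continuous_const |>.tendsto 0).comp hA
    convert (hL x y).add h0 using 2 with i
    · rw [sub_apply, inner_sub_left, add_sub_cancel, mul_apply_eq_comp, mul_apply_eq_comp,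
        adjoint_inner_right]
    · rw [add_zero]

/-- Averaging makes the limit invariant under `A ↦ T * A * adjoint T`; an ultrafilter limit of
`T ^ n * adjoint T ^ n` itself need not be. -/
noncomputable def cesaroPowAdjoint (T : E →L[𝕜] E) (n : ℕ) : E →L[𝕜] E :=
  (n : 𝕜)⁻¹ • ∑ k ∈ Finset.range n, T ^ k * adjoint T ^ k

theorem norm_cesaroPowAdjoint_le {T : E →L[𝕜] E} {C : ℝ} (hC : ∀ n, ‖T ^ n‖ ≤ C) (n : ℕ) :
    ‖cesaroPowAdjoint T n‖ ≤ C ^ 2 := by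
  have hterm : ∀ k, ‖T ^ k * adjoint T ^ k‖ ≤ C ^ 2 := fun k => calc
    ‖T ^ k * adjoint T ^ k‖ ≤ ‖T ^ k‖ * ‖adjoint T ^ k‖ := norm_mul_le _ _
    _ ≤ C * C := by
      rw [norm_adjoint_pow]
      exact mul_le_mul (hC k) (hC k) (norm_nonneg _) ((norm_nonneg _).trans (hC 0))
    _ = C ^ 2 := (sq C).symm
  calc ‖cesaroPowAdjoint T n‖
      ≤ ‖(n : 𝕜)⁻¹‖ * ‖∑ k ∈ Finset.range n, T ^ k * adjoint T ^ k‖ :=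
        norm_smul_le (n : 𝕜)⁻¹ (∑ k ∈ Finset.range n, T ^ k * adjoint T ^ k)
    _ ≤ ‖(n : 𝕜)⁻¹‖ * ∑ k ∈ Finset.range n, ‖T ^ k * adjoint T ^ k‖ := by
        gcongr
        exact norm_sum_le _ _
    _ ≤ (n : ℝ)⁻¹ * (n * C ^ 2) := by
        rw [norm_inv, RCLike.norm_natCast]
        gcongr
        exact (Finset.sum_le_sum fun k _ => hterm k).trans_eq (by simp)
    _ ≤ C ^ 2 := by
        rw [← mul_assoc]
        exact mul_le_of_le_one_left (sq_nonneg C) (inv_mul_le_one_of_le₀ le_rfl n.cast_nonneg)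

theorem re_inner_cesaroPowAdjoint_self (T : E →L[𝕜] E) (n : ℕ) (x : E) :
    RCLike.re ⟪cesaroPowAdjoint T n x, x⟫_𝕜 =
      (n : ℝ)⁻¹ * ∑ k ∈ Finset.range n, ‖(adjoint T ^ k) x‖ ^ 2 := by
  simp only [cesaroPowAdjoint, smul_apply, sum_apply, mul_apply_eq_comp, inner_smul_left,
    sum_inner, ← adjoint_inner_right, adjoint_pow, inner_self_eq_norm_sq_to_K, map_inv₀,
    map_natCast]
  rw [← RCLike.ofReal_natCast, ← RCLike.ofReal_inv, RCLike.re_ofReal_mul]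
  simp only [← RCLike.ofReal_pow, ← RCLike.ofReal_sum, RCLike.ofReal_re]

theorem mul_cesaroPowAdjoint_mul_adjoint_sub (T : E →L[𝕜] E) (n : ℕ) :
    T * cesaroPowAdjoint T n * adjoint T - cesaroPowAdjoint T n =
      (n : 𝕜)⁻¹ • (T ^ n * adjoint T ^ n - 1) := by
  have hshift : ∀ k,
      T * (T ^ k * adjoint T ^ k) * adjoint T = T ^ (k + 1) * adjoint T ^ (k + 1) := fun k => by
    rw [pow_succ', pow_succ, mul_assoc, mul_assoc, mul_assoc]
  simp only [cesaroPowAdjoint, mul_smul_comm, smul_mul_assoc, Finset.mul_sum, Finset.sum_mul,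
    hshift, ← smul_sub, ← Finset.sum_sub_distrib]
  rw [Finset.sum_range_sub (fun k => T ^ k * adjoint T ^ k), pow_zero, pow_zero, one_mul]

theorem tendsto_mul_cesaroPowAdjoint_mul_adjoint_sub {T : E →L[𝕜] E} {C : ℝ}
    (hC : ∀ n, ‖T ^ n‖ ≤ C) :
    Tendsto (fun n => T * cesaroPowAdjoint T n * adjoint T - cesaroPowAdjoint T n) atTop
      (𝓝 0) := by
  simp only [mul_cesaroPowAdjoint_mul_adjoint_sub]
  refine tendsto_inv_atTop_nhds_zero_nat.zero_smul_isBoundedUnder_le <|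
    isBoundedUnder_of ⟨C * C + 1, fun n => ?_⟩
  calc ‖T ^ n * adjoint T ^ n - 1‖ ≤ ‖T ^ n‖ * ‖adjoint T ^ n‖ + ‖(1 : E →L[𝕜] E)‖ :=
        (norm_sub_le _ _).trans (add_le_add_left (norm_mul_le _ _) _)
    _ ≤ C * C + 1 := by
        rw [norm_adjoint_pow]
        gcongr
        · exact (norm_nonneg _).trans (hC 0)
        · exact hC n
        · exact hC n
        · exact norm_id_le

theorem re_inner_pos_of_tendsto_inner_cesaroPowAdjoint {T L : E →L[𝕜] E} {l : Filter ℕ}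
    [l.NeBot] (hl : l ≤ atTop)
    (hL : ∀ x y, Tendsto (fun n => ⟪cesaroPowAdjoint T n x, y⟫_𝕜) l (𝓝 ⟪L x, y⟫_𝕜)) {w : E}
    (hw : 0 < liminf (fun n => ‖(adjoint T ^ n) w‖) atTop) : 0 < RCLike.re ⟪L w, w⟫_𝕜 := by
  set c := liminf (fun n => ‖(adjoint T ^ n) w‖) atTop
  have hbdd : IsBoundedUnder (· ≥ ·) atTop fun n => ‖(adjoint T ^ n) w‖ :=
    isBoundedUnder_of ⟨0, fun n => norm_nonneg _⟩
  have hsq : ∀ᶠ k in atTop, (c / 2) ^ 2 ≤ ‖(adjoint T ^ k) w‖ ^ 2 :=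
    (eventually_lt_of_lt_liminf (half_lt_self hw) hbdd).mono fun k hk =>
      pow_le_pow_left₀ (by positivity) hk.le 2
  have hmean := eventually_lt_cesaro (half_lt_self (by positivity : 0 < (c / 2) ^ 2)) hsq
  refine lt_of_lt_of_le (by positivity : 0 < (c / 2) ^ 2 / 2) <|
    ge_of_tendsto ((RCLike.continuous_re.tendsto _).comp (hL w w)) ((hmean.filter_mono hl).mono
      fun n hn => ?_)
  rw [Function.comp_apply, re_inner_cesaroPowAdjoint_self]
  exact hn.le

end ContinuousLinearMap

section BackwardSequences

variable {H : Type*} [NormedAddCommGroup H] [InnerProductSpace ℂ H] [CompleteSpace H]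

theorem apply_mem_MT_of_mul_mul_adjoint_eq {T L : H →L[ℂ] H} {C : ℝ} (hC : ∀ n, ‖T ^ n‖ ≤ C)
    (hL : T * L * adjoint T = L) (z : H) : L z ∈ MT T := by
  refine ⟨fun n => L ((adjoint T ^ n) z), by simp, fun n => ?_, ‖L‖ * (C * ‖z‖), fun n => ?_⟩
  · change T (L ((adjoint T ^ (n + 1)) z)) = L ((adjoint T ^ n) z)
    conv_rhs => rw [← hL]
    rw [pow_succ', mul_apply_eq_comp, mul_apply_eq_comp, mul_apply_eq_comp]
  · exact (L.le_opNorm _).trans (by gcongr; exact norm_adjoint_pow_apply_le hC n z)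

theorem exists_norm_inner_le_of_mem_MT {T : H →L[ℂ] H} {m : H} (hm : m ∈ MT T) :
    ∃ K > 0, ∀ x n, ‖⟪x, m⟫_ℂ‖ ≤ K * ‖(adjoint T ^ n) x‖ := by
  obtain ⟨xs, rfl, hstep, K, hK⟩ := hm
  have hpow : ∀ n, (T ^ n) (xs n) = xs 0 := by
    intro n
    induction n with
    | zero => rfl
    | succ n ih => rw [pow_succ, mul_apply_eq_comp, hstep, ih]
  refine ⟨max K 1, by positivity, fun x n => ?_⟩
  calc ‖⟪x, xs 0⟫_ℂ‖ = ‖⟪(adjoint T ^ n) x, xs n⟫_ℂ‖ := by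
        rw [← adjoint_pow, adjoint_inner_left, hpow]
    _ ≤ ‖(adjoint T ^ n) x‖ * ‖xs n‖ := norm_inner_le_norm _ _
    _ ≤ ‖(adjoint T ^ n) x‖ * max K 1 := by gcongr; exact (hK n).trans (le_max_left _ _)
    _ = max K 1 * ‖(adjoint T ^ n) x‖ := mul_comm _ _

end BackwardSequences

theorem stmt_6_general
    {H : Type*} [NormedAddCommGroup H] [InnerProductSpace ℂ H] [CompleteSpace H]
    (T : H →L[ℂ] H) (hT : ∃ C : ℝ, ∀ n : ℕ, ‖T ^ n‖ ≤ C) :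
    (∀ x : H, x ≠ 0 →
      0 < Filter.liminf (fun n : ℕ => ‖((ContinuousLinearMap.adjoint T) ^ n) x‖) Filter.atTop)
    ↔ Dense (MT T) := by
  obtain ⟨C, hC⟩ := hT
  constructor
  · intro hpos
    let U : Ultrafilter ℕ := .of atTop
    have hU : (U : Filter ℕ) ≤ atTop := Ultrafilter.of_le atTop
    obtain ⟨L, hL⟩ := exists_tendsto_inner_of_norm_le U
      (cesaroPowAdjoint T) (norm_cesaroPowAdjoint_le hC)
    have hinv : T * L * adjoint T = L := mul_mul_adjoint_eq_of_tendsto_inner hL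
      ((tendsto_mul_cesaroPowAdjoint_mul_adjoint_sub hC).mono_left hU)
    have hdense : Dense (Set.range L) := dense_range_of_inner_apply_self_ne_zero fun w hw h0 => by
      have := re_inner_pos_of_tendsto_inner_cesaroPowAdjoint hU hL (hpos w hw)
      simp [h0] at this
    exact hdense.mono (Set.range_subset_iff.2 (apply_mem_MT_of_mul_mul_adjoint_eq hC hinv))
  · intro hdense x hx
    obtain ⟨m, hm, hxm⟩ := hdense.exists_inner_ne_zero (𝕜 := ℂ) hx
    obtain ⟨K, hK, hle⟩ := exists_norm_inner_le_of_mem_MT hm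
    refine liminf_pos_of_forall_le (div_pos (norm_pos_iff.2 hxm) hK)
      (isBoundedUnder_of ⟨C * ‖x‖, (norm_adjoint_pow_apply_le hC · x)⟩) fun n => ?_
    rw [div_le_iff₀' hK]
    exact hle x n

/-- A power-bounded operator `T` on a complex separable Hilbert space is of class
`C·₁` (i.e. `liminf ‖(T*)ⁿx‖ > 0` for every nonzero `x`) iff `M(T)` is dense in `H`. -/
theorem stmt_6
    {H : Type*} [NormedAddCommGroup H] [InnerProductSpace ℂ H] [CompleteSpace H]
    [TopologicalSpace.SeparableSpace H]
    (T : H →L[ℂ] H) (hT : ∃ C : ℝ, ∀ n : ℕ, ‖T ^ n‖ ≤ C) :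
    (∀ x : H, x ≠ 0 →
      0 < Filter.liminf (fun n : ℕ => ‖((ContinuousLinearMap.adjoint T) ^ n) x‖) Filter.atTop)
    ↔ Dense (MT T) :=
  stmt_6_general T hT
end

section
/- A power-bounded operator T on a complex separable Hilbert space H is of class C_{·0} if and only if M(T) = {0}, i.e. if and only if T admits no nonzero bounded backward sequence. -/
open Filter ContinuousLinearMap
open scoped InnerProductSpace

noncomputable section Stmt7Aux

/-- ultrafilter limit of a complex sequence (junk value if no limit exists). -/
def ulim (U : Ultrafilter ℕ) (f : ℕ → ℂ) : ℂ := limUnder (U : Filter ℕ) f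

lemma ulim_eq {U : Ultrafilter ℕ} {f : ℕ → ℂ} {c : ℂ} (h : Filter.Tendsto f U (nhds c)) :
    ulim U f = c := h.limUnder_eq

lemma tendsto_ulim {U : Ultrafilter ℕ} {f : ℕ → ℂ} {R : ℝ} (hf : ∀ n, ‖f n‖ ≤ R) :
    Filter.Tendsto f U (nhds (ulim U f)) := by
  have hle : (↑(U.map f) : Filter ℂ) ≤ Filter.principal (Metric.closedBall (0:ℂ) R) := by
    rw [Ultrafilter.coe_map, Filter.le_principal_iff, Filter.mem_map]
    refine Filter.univ_mem' fun n => ?_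
    simpa [Metric.mem_closedBall, dist_eq_norm] using hf n
  obtain ⟨c, -, hc⟩ := (isCompact_closedBall (0:ℂ) R).ultrafilter_le_nhds (U.map f) hle
  have ht : Filter.Tendsto f U (nhds c) := hc
  rw [ulim_eq ht]; exact ht

end Stmt7Aux

/-- A power-bounded operator `T` on a complex separable Hilbert space is of class
`C·₀` (i.e. `liminf ‖(T*)ⁿx‖ = 0` for every `x`) iff `M(T) = {0}`, i.e. iff `T` has no nonzero
bounded backward sequence. -/
theorem stmt_7
    {H : Type*} [NormedAddCommGroup H] [InnerProductSpace ℂ H] [CompleteSpace H]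
    [TopologicalSpace.SeparableSpace H]
    (T : H →L[ℂ] H) (hT : ∃ C : ℝ, ∀ n : ℕ, ‖T ^ n‖ ≤ C) :
    (∀ x : H,
      Filter.liminf (fun n : ℕ => ‖((ContinuousLinearMap.adjoint T) ^ n) x‖) Filter.atTop = 0)
    ↔ MT T = {0} := by
  obtain ⟨C, hC⟩ := hT
  have hadj : ∀ n : ℕ, (ContinuousLinearMap.adjoint T) ^ n = ContinuousLinearMap.adjoint (T ^ n) := by
    intro n
    rw [← ContinuousLinearMap.star_eq_adjoint, ← ContinuousLinearMap.star_eq_adjoint, ← star_pow]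
  have hadjnorm : ∀ n : ℕ, ‖(ContinuousLinearMap.adjoint T) ^ n‖ ≤ C := by
    intro n
    rw [hadj, ← ContinuousLinearMap.star_eq_adjoint, norm_star]
    exact hC n
  constructor
  · -- C·₀ implies MT T = {0}
    intro hlim
    ext x
    simp only [Set.mem_singleton_iff]
    constructor
    · rintro ⟨xs, hx0, hrec, C', hC'⟩
      have hC'0 : 0 ≤ C' := le_trans (norm_nonneg _) (hC' 0)
      have hxn : ∀ n : ℕ, (T ^ n) (xs n) = x := by
        intro n
        induction n with
        | zero => simpa using hx0
        | succ n ih =>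
          have : (T ^ (n+1)) (xs (n+1)) = (T ^ n) (T (xs (n+1))) := by
            rw [pow_succ]; rfl
          rw [this, hrec n, ih]
      have key : ∀ n : ℕ, ‖x‖ ^ 2 ≤ C' * ‖((ContinuousLinearMap.adjoint T) ^ n) x‖ := by
        intro n
        have h1 : (⟪x, x⟫_ℂ : ℂ) = ⟪xs n, ((ContinuousLinearMap.adjoint T) ^ n) x⟫_ℂ := by
          rw [hadj, ContinuousLinearMap.adjoint_inner_right, hxn]
        have h2 : ‖x‖ ^ 2 = ‖(⟪x, x⟫_ℂ : ℂ)‖ := by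
          rw [inner_self_eq_norm_sq_to_K]
          simp [pow_two]
        rw [h2, h1]
        calc ‖(⟪xs n, ((ContinuousLinearMap.adjoint T) ^ n) x⟫_ℂ : ℂ)‖
            ≤ ‖xs n‖ * ‖((ContinuousLinearMap.adjoint T) ^ n) x‖ := norm_inner_le_norm _ _
          _ ≤ C' * ‖((ContinuousLinearMap.adjoint T) ^ n) x‖ :=
              mul_le_mul_of_nonneg_right (hC' n) (norm_nonneg _)
      have hxsq : ∀ ε : ℝ, 0 < ε → ‖x‖ ^ 2 ≤ ε := by
        intro ε hε
        have hcb : Filter.IsCoboundedUnder (· ≥ ·) Filter.atTop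
            (fun n : ℕ => ‖((ContinuousLinearMap.adjoint T) ^ n) x‖) := by
          refine Filter.IsBoundedUnder.isCoboundedUnder_ge
            (Filter.isBoundedUnder_of ⟨C * ‖x‖, fun n => ?_⟩)
          exact le_trans (ContinuousLinearMap.le_opNorm _ _)
            (mul_le_mul_of_nonneg_right (hadjnorm n) (norm_nonneg x))
        have hfreq : ∃ᶠ n in Filter.atTop,
            ‖((ContinuousLinearMap.adjoint T) ^ n) x‖ < ε / (C' + 1) := by
          refine Filter.frequently_lt_of_liminf_lt hcb ?_
          rw [hlim x]
          positivity
        obtain ⟨n, hn⟩ := hfreq.exists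
        calc ‖x‖ ^ 2 ≤ C' * ‖((ContinuousLinearMap.adjoint T) ^ n) x‖ := key n
          _ ≤ C' * (ε / (C' + 1)) :=
              mul_le_mul_of_nonneg_left hn.le hC'0
          _ ≤ ε := by
              rw [div_eq_inv_mul, ← mul_assoc]
              have h1 : C' * (C' + 1)⁻¹ ≤ 1 := by
                rw [mul_inv_le_iff₀ (by linarith)]
                linarith
              nlinarith
      have : ‖x‖ ^ 2 ≤ 0 := le_of_forall_pos_le_add (by simpa using fun ε hε => hxsq ε hε)
      have : ‖x‖ = 0 := by nlinarith [norm_nonneg x, sq_nonneg ‖x‖]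
      exact norm_eq_zero.mp this
    · rintro rfl
      exact ⟨fun _ => 0, rfl, fun n => by simp, 0, fun n => by simp⟩
  · -- MT T = {0} implies C·₀
    intro hM x
    by_contra hne
    set f : ℕ → ℝ := fun n => ‖((ContinuousLinearMap.adjoint T) ^ n) x‖ with hf
    have hfb : ∀ n, f n ≤ C * ‖x‖ := fun n =>
      le_trans (ContinuousLinearMap.le_opNorm _ _)
        (mul_le_mul_of_nonneg_right (hadjnorm n) (norm_nonneg x))
    have hbddge : Filter.IsBoundedUnder (· ≥ ·) Filter.atTop f :=
      Filter.isBoundedUnder_of ⟨0, fun n => norm_nonneg _⟩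
    have hbddle : Filter.IsBoundedUnder (· ≤ ·) Filter.atTop f :=
      Filter.isBoundedUnder_of ⟨C * ‖x‖, hfb⟩
    set L : ℝ := Filter.liminf f Filter.atTop with hLdef
    have hL0 : 0 ≤ L :=
      Filter.le_liminf_of_le hbddle.isCoboundedUnder_ge
        (Filter.Eventually.of_forall fun n => norm_nonneg _)
    have hLpos : 0 < L := lt_of_le_of_ne hL0 (Ne.symm hne)
    have hev : ∀ᶠ n in Filter.atTop, L / 2 < f n :=
      Filter.eventually_lt_of_lt_liminf (by linarith) hbddge
    -- ultrafilter extending atTop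
    let U : Ultrafilter ℕ := Ultrafilter.of Filter.atTop
    have hUle : (U : Filter ℕ) ≤ Filter.atTop := Ultrafilter.of_le _
    -- the approximating backward sequences
    set c : ℕ → ℕ → H :=
      fun j n => (T ^ (n - j)) (((ContinuousLinearMap.adjoint T) ^ n) x) with hc
    set K : ℝ := C * (C * ‖x‖) with hK
    have hC0 : 0 ≤ C := le_trans (norm_nonneg _) (hC 0)
    have hK0 : 0 ≤ K := by positivity
    have hcb : ∀ j n, ‖c j n‖ ≤ K := by
      intro j n
      calc ‖c j n‖ ≤ ‖T ^ (n - j)‖ * ‖((ContinuousLinearMap.adjoint T) ^ n) x‖ :=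
            ContinuousLinearMap.le_opNorm _ _
        _ ≤ C * (C * ‖x‖) := by
            apply mul_le_mul (hC _) (hfb n) (norm_nonneg _) hC0
    have hib : ∀ j n (y : H), ‖(⟪c j n, y⟫_ℂ : ℂ)‖ ≤ K * ‖y‖ := fun j n y =>
      le_trans (norm_inner_le_norm _ _) (mul_le_mul_of_nonneg_right (hcb j n) (norm_nonneg y))
    -- construct the weak limits
    have Ldef : ∀ j : ℕ, ∃ b : H,
        (∀ y : H, (⟪b, y⟫_ℂ : ℂ) = ulim U (fun n => ⟪c j n, y⟫_ℂ)) ∧ ‖b‖ ≤ K := by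
      intro j
      have tend : ∀ y : H, Filter.Tendsto (fun n => (⟪c j n, y⟫_ℂ : ℂ)) U
          (nhds (ulim U (fun n => ⟪c j n, y⟫_ℂ))) := fun y => tendsto_ulim (fun n => hib j n y)
      let Lmap : H →ₗ[ℂ] ℂ :=
        { toFun := fun y => ulim U (fun n => ⟪c j n, y⟫_ℂ)
          map_add' := fun y z => by
            have : Filter.Tendsto (fun n => (⟪c j n, y + z⟫_ℂ : ℂ)) U
                (nhds (ulim U (fun n => ⟪c j n, y⟫_ℂ) + ulim U (fun n => ⟪c j n, z⟫_ℂ))) := by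
              simpa [inner_add_right] using (tend y).add (tend z)
            exact ulim_eq this
          map_smul' := fun r y => by
            have : Filter.Tendsto (fun n => (⟪c j n, r • y⟫_ℂ : ℂ)) U
                (nhds (r * ulim U (fun n => ⟪c j n, y⟫_ℂ))) := by
              simpa [inner_smul_right] using (tend y).const_mul r
            simpa using ulim_eq this }
      have hLb : ∀ y : H, ‖Lmap y‖ ≤ K * ‖y‖ := fun y =>
        le_of_tendsto (tend y).norm (Filter.Eventually.of_forall fun n => hib j n y)
      let Lc : H →L[ℂ] ℂ := Lmap.mkContinuous K hLb
      refine ⟨(InnerProductSpace.toDual ℂ H).symm Lc, fun y => ?_, ?_⟩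
      · rw [InnerProductSpace.toDual_symm_apply]
        rfl
      · rw [LinearIsometryEquiv.norm_map]
        exact Lmap.mkContinuous_norm_le hK0 hLb
    choose b hb hbn using Ldef
    -- backward sequence property
    have hrec : ∀ j : ℕ, T (b (j + 1)) = b j := by
      intro j
      refine ext_inner_right ℂ fun y => ?_
      have h1 : (⟪T (b (j+1)), y⟫_ℂ : ℂ) = ⟪b (j+1), ContinuousLinearMap.adjoint T y⟫_ℂ :=
        (ContinuousLinearMap.adjoint_inner_right T _ y).symm
      rw [h1, hb (j+1) (ContinuousLinearMap.adjoint T y), hb j y]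
      have h2 : (fun n => (⟪c (j+1) n, ContinuousLinearMap.adjoint T y⟫_ℂ : ℂ))
          = fun n => (⟪T (c (j+1) n), y⟫_ℂ : ℂ) := by
        funext n
        exact ContinuousLinearMap.adjoint_inner_right T _ y
      rw [h2]
      -- the two sequences agree for n ≥ j+1
      have heq : ∀ n : ℕ, j + 1 ≤ n → T (c (j+1) n) = c j n := by
        intro n hn
        have hnj : n - j = (n - (j+1)) + 1 := by omega
        simp only [hc]
        rw [hnj, pow_succ']
        rfl
      have heqU : (fun n => (⟪T (c (j+1) n), y⟫_ℂ : ℂ)) =ᶠ[(U : Filter ℕ)]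
          (fun n => (⟪c j n, y⟫_ℂ : ℂ)) := by
        refine Filter.Eventually.filter_mono hUle ?_
        filter_upwards [Filter.eventually_ge_atTop (j+1)] with n hn
        rw [heq n hn]
      have tendc : Filter.Tendsto (fun n => (⟪c j n, y⟫_ℂ : ℂ)) U
          (nhds (ulim U (fun n => ⟪c j n, y⟫_ℂ))) := tendsto_ulim (fun n => hib j n y)
      have : Filter.Tendsto (fun n => (⟪T (c (j+1) n), y⟫_ℂ : ℂ)) U
          (nhds (ulim U (fun n => ⟪c j n, y⟫_ℂ))) := tendc.congr' heqU.symm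
      rw [ulim_eq this]
    -- b 0 is nonzero
    have hval : ∀ n : ℕ, (⟪c 0 n, x⟫_ℂ : ℂ) = ((f n : ℝ) : ℂ) ^ 2 := by
      intro n
      have h1 : c 0 n = (T ^ n) (((ContinuousLinearMap.adjoint T) ^ n) x) := by
        simp [hc]
      rw [h1]
      have h2 : (⟪(T ^ n) (((ContinuousLinearMap.adjoint T) ^ n) x), x⟫_ℂ : ℂ)
          = ⟪((ContinuousLinearMap.adjoint T) ^ n) x,
              ContinuousLinearMap.adjoint (T ^ n) x⟫_ℂ :=
        (ContinuousLinearMap.adjoint_inner_right (T ^ n) _ x).symm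
      rw [h2, ← hadj n, inner_self_eq_norm_sq_to_K]
      norm_cast
    have htend : Filter.Tendsto (fun n => (⟪c 0 n, x⟫_ℂ : ℂ)) U (nhds (⟪b 0, x⟫_ℂ : ℂ)) := by
      rw [hb 0 x]
      exact tendsto_ulim (fun n => hib 0 n x)
    have htendre : Filter.Tendsto (fun n => (f n) ^ 2) U (nhds ((⟪b 0, x⟫_ℂ : ℂ).re)) := by
      have := (Complex.continuous_re.tendsto _).comp htend
      refine this.congr fun n => ?_
      simp only [Function.comp_apply, hval n]
      norm_cast
    have hre : (L / 2) ^ 2 ≤ ((⟪b 0, x⟫_ℂ : ℂ)).re := by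
      refine ge_of_tendsto htendre ?_
      refine Filter.Eventually.filter_mono hUle ?_
      filter_upwards [hev] with n hn
      have hL2 : 0 ≤ L / 2 := by linarith
      nlinarith
    have hb0ne : b 0 ≠ 0 := by
      intro h0
      rw [h0] at hre
      simp only [inner_zero_left, Complex.zero_re] at hre
      nlinarith
    have hmem : b 0 ∈ MT T := ⟨b, rfl, hrec, K, hbn⟩
    rw [hM] at hmem
    exact hb0ne hmem
end

section
/- There exist a complex separable Hilbert space H, a contraction T on H of class C_{·1}, and a vector x ∈ H such that x lies in ⋂_{n∈ℕ} Tⁿ(H) (i.e. x is the origin of a backward sequence) but x ∉ M(T) (i.e. x admits no bounded backward sequence). In particular, M(T) can be a proper subset of T^∞(H) := ⋂_{n∈ℕ} Tⁿ(H) even for C_{·1} contractions. -/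
/-!
On `ℓ²(ℕ × ℕ)`, viewed as countably many copies of `ℓ²(ℕ)`, let `T` act on the `k`-th copy as
the backward shift whose weights are all `1` except for the weight `1/(k+1)` at position `k + 1`.
Every product of consecutive weights on copy `k` lies in `[1/(k+1), 1]`, so `T` is a contraction
and `|f (k, j)| / (k+1) ≤ ‖T*ⁿ f‖` for all `n`: `T` is of class `C·₁`. The vector
`x = ∑ₖ (k+1)⁻¹ e_{(k,0)}` lies in the range of every `Tⁿ`, but `Tⁿ xₙ = x` forces
`xₙ (k, n) = 1` for all `k < n`, so `‖xₙ‖² ≥ n` and no backward sequence of `x` is bounded.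
-/

noncomputable section

open Filter ContinuousLinearMap TopologicalSpace
open scoped ENNReal

namespace lp

section WeightedComp

variable {ι κ 𝕜 E : Type*} [NormedField 𝕜] [NormedAddCommGroup E] [NormedSpace 𝕜 E]
  {p : ℝ≥0∞} (σ : κ → ι) (a : κ → 𝕜)

theorem sum_norm_weightedComp_rpow_le (hp : 0 < p.toReal) (ha : ∀ i, ‖a i‖ ≤ 1)
    (hσ : Set.InjOn σ {i | a i ≠ 0}) (f : lp (fun _ : ι => E) p) (s : Finset κ) :
    ∑ i ∈ s, ‖a i • f (σ i)‖ ^ p.toReal ≤ ‖f‖ ^ p.toReal := by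
  classical
  calc ∑ i ∈ s, ‖a i • f (σ i)‖ ^ p.toReal
      = ∑ i ∈ s with a i ≠ 0, ‖a i • f (σ i)‖ ^ p.toReal := by
        refine (Finset.sum_filter_of_ne fun i _ h ↦ ?_).symm
        rintro h0
        simp [h0, Real.zero_rpow hp.ne'] at h
    _ ≤ ∑ i ∈ s with a i ≠ 0, ‖f (σ i)‖ ^ p.toReal := by
        gcongr with i
        rw [norm_smul]
        exact mul_le_of_le_one_left (norm_nonneg _) (ha i)
    _ = ∑ j ∈ (s.filter (a · ≠ 0)).image σ, ‖f j‖ ^ p.toReal :=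
        (Finset.sum_image (f := fun j ↦ ‖f j‖ ^ p.toReal) fun i hi j hj ↦
          hσ (Finset.mem_filter.1 hi).2 (Finset.mem_filter.1 hj).2).symm
    _ ≤ ‖f‖ ^ p.toReal := sum_rpow_le_norm_rpow hp f _

theorem _root_.Memℓp.weightedComp (hp : 0 < p.toReal) (ha : ∀ i, ‖a i‖ ≤ 1)
    (hσ : Set.InjOn σ {i | a i ≠ 0}) (f : lp (fun _ : ι => E) p) :
    Memℓp (fun i ↦ a i • f (σ i)) p :=
  memℓp_gen' (sum_norm_weightedComp_rpow_le σ a hp ha hσ f)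

variable [Fact (1 ≤ p)]

def weightedComp (hp : p ≠ ∞) (ha : ∀ i, ‖a i‖ ≤ 1) (hσ : Set.InjOn σ {i | a i ≠ 0}) :
    lp (fun _ : ι => E) p →L[𝕜] lp (fun _ : κ => E) p :=
  have hp' : 0 < p.toReal := ENNReal.toReal_pos (zero_lt_one.trans_le Fact.out).ne' hp
  LinearMap.mkContinuous
    { toFun f := ⟨fun i ↦ a i • f (σ i), .weightedComp σ a hp' ha hσ f⟩
      map_add' f g := by ext i; exact smul_add _ _ _
      map_smul' c f := by ext i; simp [smul_comm (a i) c] }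
    1 fun f ↦ by
      simpa using norm_le_of_forall_sum_le hp' (norm_nonneg f)
        (sum_norm_weightedComp_rpow_le σ a hp' ha hσ f)

theorem norm_weightedComp_apply_le (hp : p ≠ ∞) (ha : ∀ i, ‖a i‖ ≤ 1)
    (hσ : Set.InjOn σ {i | a i ≠ 0}) (f : lp (fun _ : ι => E) p) :
    ‖(weightedComp σ a hp ha hσ f : lp (fun _ : κ => E) p)‖ ≤ ‖f‖ := by
  have hp' : 0 < p.toReal := ENNReal.toReal_pos (zero_lt_one.trans_le Fact.out).ne' hp
  exact norm_le_of_forall_sum_le hp' (norm_nonneg f)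
    (sum_norm_weightedComp_rpow_le σ a hp' ha hσ f)

theorem weightedComp_apply (hp : p ≠ ∞) (ha : ∀ i, ‖a i‖ ≤ 1)
    (hσ : Set.InjOn σ {i | a i ≠ 0}) (f : lp (fun _ : ι => E) p) (i : κ) :
    weightedComp σ a hp ha hσ f i = a i • f (σ i) :=
  rfl

end WeightedComp

theorem card_le_norm_rpow {ι : Type*} {E : ι → Type*} [∀ i, NormedAddCommGroup (E i)]
    {p : ℝ≥0∞} (hp : 0 < p.toReal) (f : lp E p) (s : Finset ι) (hs : ∀ i ∈ s, 1 ≤ ‖f i‖) :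
    (s.card : ℝ) ≤ ‖f‖ ^ p.toReal :=
  calc (s.card : ℝ) = ∑ _i ∈ s, 1 := by simp
    _ ≤ ∑ i ∈ s, ‖f i‖ ^ p.toReal :=
        Finset.sum_le_sum fun i hi ↦ Real.one_le_rpow (hs i hi) hp.le
    _ ≤ ‖f‖ ^ p.toReal := sum_rpow_le_norm_rpow hp f s

theorem separableSpace {ι : Type*} [Countable ι] {E : ι → Type*} [∀ i, NormedAddCommGroup (E i)]
    [∀ i, SeparableSpace (E i)] {p : ℝ≥0∞} [Fact (1 ≤ p)] (hp : p ≠ ∞) :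
    SeparableSpace (lp E p) := by
  classical
  rw [← isSeparable_univ_iff]
  have hsingle : IsSeparable (⋃ i, Set.range (lp.single p i : E i → lp E p)) :=
    .iUnion fun i ↦ isSeparable_range (lp.isometry_single i).continuous
  refine hsingle.span (R := ℕ) |>.closure.mono fun f _ ↦ ?_
  refine mem_closure_of_tendsto (lp.hasSum_single hp f) (Filter.Eventually.of_forall fun s ↦ ?_)
  exact Submodule.sum_mem _ fun i _ ↦ Submodule.subset_span (Set.mem_iUnion_of_mem i ⟨_, rfl⟩)

end lp

theorem Memℓp.ite_snd_eq {α β 𝕜 : Type*} [NormedField 𝕜] [DecidableEq β] {p : ℝ≥0∞}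
    (hp : 0 < p.toReal) {f : α → 𝕜} (hf : Memℓp f p) (b : β) :
    Memℓp (fun q : α × β ↦ if q.2 = b then f q.1 else 0) p := by
  convert Memℓp.weightedComp Prod.fst (fun q : α × β ↦ if q.2 = b then (1 : 𝕜) else 0) hp
    (fun q ↦ by split_ifs <;> simp) (fun q hq r hr h ↦ Prod.ext h (by simp_all)) ⟨f, hf⟩
    using 2 with q
  split_ifs <;> simp

theorem ContinuousLinearMap.pow_apply_eq_of_backward {R M : Type*} [Semiring R]
    [AddCommMonoid M] [TopologicalSpace M] [Module R M] (T : M →L[R] M) {xs : ℕ → M}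
    (hxs : ∀ n, T (xs (n + 1)) = xs n) (n : ℕ) : (T ^ n) (xs n) = xs 0 := by
  induction n with
  | zero => rfl
  | succ n ih => rw [pow_succ, mul_apply_eq_comp, hxs, ih]

theorem ContinuousLinearMap.norm_pow_apply_le_of_norm_le_one {𝕜 E : Type*}
    [NontriviallyNormedField 𝕜] [SeminormedAddCommGroup E] [NormedSpace 𝕜 E] {A : E →L[𝕜] E}
    (hA : ‖A‖ ≤ 1) (n : ℕ) (x : E) : ‖(A ^ n) x‖ ≤ ‖x‖ := by
  induction n with
  | zero => rfl
  | succ n ih =>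
    rw [pow_succ', mul_apply_eq_comp]
    exact (A.le_of_opNorm_le hA _).trans (by simpa using ih)

namespace WeightedRowShift

abbrev H : Type := lp (fun _ : ℕ × ℕ => ℂ) 2

def weight (k j : ℕ) : ℂ := if j = k + 1 then ((k + 1 : ℕ) : ℂ)⁻¹ else 1

theorem norm_inv_natCast_succ (k : ℕ) : ‖((k + 1 : ℕ) : ℂ)⁻¹‖ = ((k + 1 : ℕ) : ℝ)⁻¹ := by
  rw [norm_inv, Complex.norm_natCast]

theorem inv_natCast_succ_le_one (k : ℕ) : ((k + 1 : ℕ) : ℝ)⁻¹ ≤ 1 :=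
  inv_le_one_of_one_le₀ (by simp)

theorem norm_weight_le_one (k j : ℕ) : ‖weight k j‖ ≤ 1 := by
  unfold weight
  split_ifs
  · rw [norm_inv_natCast_succ]; exact inv_natCast_succ_le_one k
  · simp

def shift : H →L[ℂ] H :=
  lp.weightedComp (fun q ↦ (q.1, q.2 + 1)) (fun q ↦ weight q.1 (q.2 + 1)) ENNReal.ofNat_ne_top
    (fun q ↦ norm_weight_le_one _ _)
    (fun q _ r _ h ↦ by simpa [Prod.ext_iff] using h)

theorem shift_apply (f : H) (k j : ℕ) : shift f (k, j) = weight k (j + 1) * f (k, j + 1) :=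
  lp.weightedComp_apply _ _ _ _ _ f (k, j)

theorem norm_shift_apply_le (f : H) : ‖shift f‖ ≤ ‖f‖ :=
  lp.norm_weightedComp_apply_le _ _ _ _ _ f

theorem norm_adjoint_shift_le : ‖adjoint shift‖ ≤ 1 := by
  rw [LinearIsometryEquiv.norm_map]
  exact opNorm_le_bound _ zero_le_one fun f ↦ by simpa using norm_shift_apply_le f

def weightProd (k j n : ℕ) : ℂ := ∏ i ∈ Finset.Ioc j (j + n), weight k i

theorem weightProd_succ (k j n : ℕ) :
    weightProd k j (n + 1) = weightProd k j n * weight k (j + n + 1) :=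
  Finset.prod_Ioc_succ_top (Nat.le_add_right _ _) _

theorem weightProd_eq (k j n : ℕ) :
    weightProd k j n = if j < k + 1 ∧ k + 1 ≤ j + n then ((k + 1 : ℕ) : ℂ)⁻¹ else 1 := by
  simp only [weightProd, weight, Finset.prod_ite_eq', Finset.mem_Ioc]

theorem inv_natCast_succ_le_norm_weightProd (k j n : ℕ) :
    ((k + 1 : ℕ) : ℝ)⁻¹ ≤ ‖weightProd k j n‖ := by
  rw [weightProd_eq]
  split_ifs
  · rw [norm_inv_natCast_succ]
  · simpa using inv_natCast_succ_le_one k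

theorem shift_pow_apply (n : ℕ) (f : H) (k j : ℕ) :
    (shift ^ n) f (k, j) = weightProd k j n * f (k, j + n) := by
  induction n generalizing f with
  | zero => simp [weightProd]
  | succ n ih =>
    rw [pow_succ, mul_apply_eq_comp, ih, shift_apply, weightProd_succ, mul_assoc]
    rfl

theorem adjoint_shift_pow_apply (n : ℕ) (f : H) (k j : ℕ) :
    (adjoint shift ^ n) f (k, j + n) = starRingEnd ℂ (weightProd k j n) * f (k, j) := by
  classical
  have hsingle :
      (shift ^ n) (lp.single 2 (k, j + n) 1) = lp.single 2 (k, j) (weightProd k j n) := by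
    ext ⟨k', j'⟩
    rw [shift_pow_apply, lp.single_apply, lp.single_apply]
    by_cases h : (k', j') = (k, j)
    · obtain ⟨rfl, rfl⟩ := Prod.ext_iff.1 h
      simp
    · have h' : (k', j' + n) ≠ (k, j + n) := by simpa [Prod.ext_iff] using h
      simp [Pi.single_eq_of_ne h, Pi.single_eq_of_ne h']
  have := adjoint_inner_right (shift ^ n) (lp.single 2 (k, j + n) 1) f
  rw [← star_eq_adjoint, star_pow, star_eq_adjoint, hsingle, lp.inner_single_left,
    lp.inner_single_left] at this
  simpa [mul_comm] using this

theorem liminf_norm_adjoint_shift_pow_pos {f : H} (hf : f ≠ 0) :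
    0 < liminf (fun n ↦ ‖(adjoint shift ^ n) f‖) atTop := by
  obtain ⟨⟨k, j⟩, hkj⟩ : ∃ q, f q ≠ 0 := by
    by_contra! h
    exact hf (lp.ext (funext h))
  have hlower (n : ℕ) : ((k + 1 : ℕ) : ℝ)⁻¹ * ‖f (k, j)‖ ≤ ‖(adjoint shift ^ n) f‖ :=
    calc ((k + 1 : ℕ) : ℝ)⁻¹ * ‖f (k, j)‖ ≤ ‖weightProd k j n‖ * ‖f (k, j)‖ := by
          gcongr; exact inv_natCast_succ_le_norm_weightProd k j n
      _ = ‖(adjoint shift ^ n) f (k, j + n)‖ := by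
          rw [adjoint_shift_pow_apply, norm_mul, RCLike.norm_conj]
      _ ≤ ‖(adjoint shift ^ n) f‖ := lp.norm_apply_le_norm two_ne_zero _ _
  have hupper : IsBoundedUnder (· ≤ ·) atTop (fun n ↦ ‖(adjoint shift ^ n) f‖) :=
    isBoundedUnder_of ⟨‖f‖, fun n ↦ norm_pow_apply_le_of_norm_le_one norm_adjoint_shift_le n f⟩
  calc (0 : ℝ) < ((k + 1 : ℕ) : ℝ)⁻¹ * ‖f (k, j)‖ := by positivity
    _ ≤ _ := le_liminf_of_le hupper.isCoboundedUnder_ge (.of_forall hlower)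

def rowVec (b : ℕ) (v : ℕ → ℂ) (hv : Memℓp v 2) : H :=
  ⟨fun q ↦ if q.2 = b then v q.1 else 0, hv.ite_snd_eq (by norm_num) b⟩

theorem rowVec_apply (b : ℕ) (v : ℕ → ℂ) (hv : Memℓp v 2) (k j : ℕ) :
    rowVec b v hv (k, j) = if j = b then v k else 0 :=
  rfl

theorem memℓp_inv_natCast_succ : Memℓp (fun k : ℕ ↦ ((k + 1 : ℕ) : ℂ)⁻¹) 2 := by
  refine memℓp_gen <| ((summable_nat_add_iff 1).2 (Real.summable_nat_pow_inv.2 one_lt_two)).congr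
    fun k ↦ ?_
  rw [norm_inv_natCast_succ, ENNReal.toReal_ofNat, Real.rpow_two, inv_pow]

def baseVec : H := rowVec 0 (fun k ↦ ((k + 1 : ℕ) : ℂ)⁻¹) memℓp_inv_natCast_succ

theorem memℓp_backwardRow (n : ℕ) :
    Memℓp (fun k : ℕ ↦ if k < n then 1 else ((k + 1 : ℕ) : ℂ)⁻¹) 2 := by
  have hfin : Memℓp (fun k : ℕ ↦ if k < n then 1 - ((k + 1 : ℕ) : ℂ)⁻¹ else 0) 2 :=
    (memℓp_zero ((Set.finite_lt_nat n).subset fun k hk ↦ by by_contra h; simp_all)).of_exponent_ge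
      bot_le
  convert hfin.add memℓp_inv_natCast_succ using 1
  funext k
  simp only [Pi.add_apply]
  split_ifs <;> simp

def backwardVec (n : ℕ) : H := rowVec n _ (memℓp_backwardRow n)

theorem shift_pow_backwardVec (n : ℕ) : (shift ^ n) (backwardVec n) = baseVec := by
  ext ⟨k, j⟩
  simp only [shift_pow_apply, weightProd_eq, backwardVec, baseVec, rowVec_apply]
  split_ifs <;> first | omega | simp

theorem not_exists_bounded_backward :
    ¬ ∃ xs : ℕ → H, xs 0 = baseVec ∧ (∀ n, shift (xs (n + 1)) = xs n) ∧
      ∃ C : ℝ, ∀ n, ‖xs n‖ ≤ C := by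
  rintro ⟨xs, hx, hxs, C, hC⟩
  have hone (n k : ℕ) (hk : k < n) : xs n (k, n) = 1 := by
    have h := congrArg (· (k, 0)) (shift.pow_apply_eq_of_backward hxs n)
    simp only [shift_pow_apply, weightProd_eq, hx, baseVec, rowVec_apply, zero_add,
      ↓reduceIte] at h
    rw [if_pos (by omega)] at h
    exact mul_eq_left₀ (by simpa using Nat.cast_add_one_ne_zero k) |>.1 h
  have hcard (n : ℕ) : (n : ℝ) ≤ C ^ (2 : ℝ≥0∞).toReal :=
    calc (n : ℝ) = ((Finset.range n).image (·, n)).card := by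
          rw [Finset.card_image_of_injective _ fun a b h ↦ congrArg Prod.fst h, Finset.card_range]
      _ ≤ ‖xs n‖ ^ (2 : ℝ≥0∞).toReal := by
          refine lp.card_le_norm_rpow (by norm_num) _ _ fun q hq ↦ ?_
          obtain ⟨k, hk, rfl⟩ := Finset.mem_image.1 hq
          rw [hone n k (Finset.mem_range.1 hk), norm_one]
      _ ≤ C ^ (2 : ℝ≥0∞).toReal := by gcongr; exact hC n
  obtain ⟨n, hn⟩ := exists_nat_gt (C ^ (2 : ℝ≥0∞).toReal)
  exact (hcard n).not_gt hn

end WeightedRowShift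

end

/-- There exist a complex separable Hilbert space `H`, a contraction `T` on `H` of
class `C·₁`, and `x ∈ H` lying in `⋂ₙ Tⁿ(H)` (so `x` starts a backward sequence) but admitting
no *bounded* backward sequence, i.e. `x ∉ M(T)`. -/
theorem stmt_8 :
    ∃ (H : Type) (_i1 : NormedAddCommGroup H)
      (_i2 : @InnerProductSpace ℂ H Complex.instRCLike _i1.toSeminormedAddCommGroup), by
      letI := _i1; letI := _i2
      exact ∃ _i3 : CompleteSpace H, by
        letI := _i3
        exact TopologicalSpace.SeparableSpace H ∧
          ∃ (T : H →L[ℂ] H) (x : H),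
            (∀ y : H, ‖T y‖ ≤ ‖y‖) ∧
            (∀ y : H, y ≠ 0 → 0 < Filter.liminf
              (fun n : ℕ => ‖((ContinuousLinearMap.adjoint T) ^ n) y‖) Filter.atTop) ∧
            (∀ n : ℕ, ∃ z : H, (T ^ n) z = x) ∧
            ¬ (∃ xs : ℕ → H, xs 0 = x ∧ (∀ n : ℕ, T (xs (n + 1)) = xs n) ∧
                ∃ C : ℝ, ∀ n : ℕ, ‖xs n‖ ≤ C) := by
  open WeightedRowShift in
  exact ⟨H, inferInstance, inferInstance, inferInstance, lp.separableSpace ENNReal.ofNat_ne_top,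
    shift, baseVec, norm_shift_apply_le, fun _ ↦ liminf_norm_adjoint_shift_pow_pos,
    fun n ↦ ⟨backwardVec n, shift_pow_backwardVec n⟩, not_exists_bounded_backward⟩
end

section
/- Let T be a power-bounded and boundedly invertible operator on a complex separable Hilbert space H. Then ‖(T*)ⁿx‖ → 0 for all x ∈ H if and only if ‖T⁻ⁿx‖ → ∞ for all nonzero x ∈ H. -/
open Filter ContinuousLinearMap

local notation "⟪" x ", " y "⟫" => @inner ℂ _ _ x y

set_option maxHeartbeats 1000000 in
/-- For a power-bounded, boundedly invertible operator `T` on a complex separable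
Hilbert space, `‖(T*)ⁿx‖ → 0` for all `x` iff `‖T⁻ⁿx‖ → ∞` for all nonzero `x`. -/
theorem stmt_9
    {H : Type*} [NormedAddCommGroup H] [InnerProductSpace ℂ H] [CompleteSpace H]
    [TopologicalSpace.SeparableSpace H]
    (T Tinv : H →L[ℂ] H) (hT : ∃ C : ℝ, ∀ n : ℕ, ‖T ^ n‖ ≤ C)
    (hinv₁ : T ∘L Tinv = ContinuousLinearMap.id ℂ H)
    (hinv₂ : Tinv ∘L T = ContinuousLinearMap.id ℂ H) :
    (∀ x : H,
        Filter.Tendsto (fun n : ℕ => ‖((ContinuousLinearMap.adjoint T) ^ n) x‖)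
          Filter.atTop (nhds 0)) ↔
    (∀ x : H, x ≠ 0 →
        Filter.Tendsto (fun n : ℕ => ‖(Tinv ^ n) x‖) Filter.atTop Filter.atTop) := by
  obtain ⟨C₀, hC₀⟩ := hT
  set C : ℝ := max C₀ 1 with hCdef
  have hC1 : (1:ℝ) ≤ C := le_max_right _ _
  have hCpos : (0:ℝ) < C := lt_of_lt_of_le one_pos hC1
  have hCn : ∀ n : ℕ, ‖T ^ n‖ ≤ C := fun n => (hC₀ n).trans (le_max_left _ _)
  have hTTinv : T * Tinv = 1 := hinv₁
  have hTinvT : Tinv * T = 1 := hinv₂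
  have hcomm : Commute Tinv T := by
    unfold Commute SemiconjBy; rw [hTinvT, hTTinv]
  have hpow₂ : ∀ n : ℕ, Tinv ^ n * T ^ n = 1 := by
    intro n; rw [← hcomm.mul_pow, hTinvT, one_pow]
  have hpow₁ : ∀ n : ℕ, T ^ n * Tinv ^ n = 1 := by
    intro n; rw [← hcomm.symm.mul_pow, hTTinv, one_pow]
  have hadj : ∀ n : ℕ, (adjoint T) ^ n = adjoint (T ^ n) := by
    intro n; rw [← star_eq_adjoint, ← star_eq_adjoint, ← star_pow]
  have hadjn : ∀ n : ℕ, ‖(adjoint T) ^ n‖ ≤ C := by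
    intro n; rw [hadj n, LinearIsometryEquiv.norm_map adjoint (T ^ n)]; exact hCn n
  constructor
  · -- forward
    intro h x hx
    have hx2 : (0:ℝ) < ‖x‖ := norm_pos_iff.mpr hx
    rw [tendsto_atTop]
    intro M
    set M' : ℝ := max M 1 with hM'def
    have hM'pos : (0:ℝ) < M' := lt_of_lt_of_le one_pos (le_max_right _ _)
    have hδ : (0:ℝ) < ‖x‖^2 / M' := by positivity
    filter_upwards [(h x).eventually_lt_const hδ] with n hn
    have key : ‖x‖^2 ≤ ‖(Tinv ^ n) x‖ * ‖((adjoint T) ^ n) x‖ := by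
      have h1 : ⟪(T ^ n) ((Tinv ^ n) x), x⟫ = ⟪(Tinv ^ n) x, ((adjoint T) ^ n) x⟫ := by
        rw [hadj n, adjoint_inner_right]
      have h2 : (T ^ n) ((Tinv ^ n) x) = x := by
        have := congrArg (fun A : H →L[ℂ] H => A x) (hpow₁ n)
        simpa using this
      have h3 : ((‖x‖:ℂ))^2 = ⟪(Tinv ^ n) x, ((adjoint T) ^ n) x⟫ := by
        rw [← h1, h2, inner_self_eq_norm_sq_to_K]
        norm_cast
      calc ‖x‖^2 = ‖((‖x‖:ℂ))^2‖ := by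
            rw [norm_pow, Complex.norm_real, Real.norm_eq_abs, abs_of_nonneg (norm_nonneg x)]
        _ = ‖⟪(Tinv ^ n) x, ((adjoint T) ^ n) x⟫‖ := by rw [h3]
        _ ≤ ‖(Tinv ^ n) x‖ * ‖((adjoint T) ^ n) x‖ := norm_inner_le_norm _ _
    have hM : M ≤ M' := le_max_left _ _
    have hB : (0:ℝ) ≤ ‖(Tinv ^ n) x‖ := norm_nonneg _
    have hA : (0:ℝ) ≤ ‖((adjoint T) ^ n) x‖ := norm_nonneg _
    have hBApos : (0:ℝ) < ‖(Tinv ^ n) x‖ * ‖((adjoint T) ^ n) x‖ :=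
      lt_of_lt_of_le (by positivity) key
    have hApos : (0:ℝ) < ‖((adjoint T) ^ n) x‖ := by nlinarith
    have hAM : ‖((adjoint T) ^ n) x‖ * M' < ‖x‖^2 := by
      rw [lt_div_iff₀ hM'pos] at hn; linarith
    nlinarith
  · -- backward
    intro h y
    by_contra hy
    rw [Metric.tendsto_atTop] at hy
    push_neg at hy
    obtain ⟨ε, hε, hfreq⟩ := hy
    have hdist : ∀ n : ℕ, dist ‖((adjoint T) ^ n) y‖ 0 = ‖((adjoint T) ^ n) y‖ := by
      intro n; rw [Real.dist_eq, sub_zero, abs_of_nonneg (norm_nonneg _)]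
    set δ : ℝ := ε / C with hδdef
    have hδpos : (0:ℝ) < δ := div_pos hε hCpos
    have hlow : ∀ n : ℕ, δ ≤ ‖((adjoint T) ^ n) y‖ := by
      intro n
      obtain ⟨m, hmn, hm⟩ := hfreq n
      rw [hdist m] at hm
      have hsplit : (adjoint T) ^ m = ((adjoint T) ^ (m - n)) * ((adjoint T) ^ n) := by
        rw [← pow_add, Nat.sub_add_cancel hmn]
      have : ε ≤ C * ‖((adjoint T) ^ n) y‖ := by
        calc ε ≤ ‖((adjoint T) ^ m) y‖ := hm
          _ = ‖((adjoint T) ^ (m - n)) (((adjoint T) ^ n) y)‖ := by rw [hsplit]; rfl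
          _ ≤ ‖(adjoint T) ^ (m - n)‖ * ‖((adjoint T) ^ n) y‖ := le_opNorm _ _
          _ ≤ C * ‖((adjoint T) ^ n) y‖ :=
              mul_le_mul_of_nonneg_right (hadjn _) (norm_nonneg _)
      rw [hδdef, div_le_iff₀ hCpos]
      linarith [this]
    set a : ℕ → H := fun n => ((adjoint T) ^ n) y with hadef
    set z : ℕ → H := fun n => (T ^ n) (a n) with hzdef
    have ha_norm : ∀ n, ‖a n‖ ≤ C * ‖y‖ := by
      intro n
      calc ‖a n‖ ≤ ‖(adjoint T) ^ n‖ * ‖y‖ := le_opNorm _ _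
        _ ≤ C * ‖y‖ := mul_le_mul_of_nonneg_right (hadjn n) (norm_nonneg y)
    have hz_norm : ∀ n, ‖z n‖ ≤ C * (C * ‖y‖) := by
      intro n
      calc ‖z n‖ ≤ ‖T ^ n‖ * ‖a n‖ := le_opNorm _ _
        _ ≤ C * (C * ‖y‖) :=
          mul_le_mul (hCn n) (ha_norm n) (norm_nonneg _) (le_of_lt hCpos)
    have han : ∀ n, a n = (adjoint (T ^ n)) y := by
      intro n; simp only [hadef, hadj n]
    have hzy : ∀ n, ⟪z n, y⟫ = ((‖a n‖ : ℂ))^2 := by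
      intro n
      calc ⟪z n, y⟫ = ⟪a n, (adjoint (T ^ n)) y⟫ := (adjoint_inner_right _ _ _).symm
        _ = ⟪a n, a n⟫ := by rw [← han n]
        _ = ((‖a n‖ : ℂ))^2 := inner_self_eq_norm_sq_to_K _
    set U : Ultrafilter ℕ := Ultrafilter.of atTop with hUdef
    have hU : (U : Filter ℕ) ≤ atTop := Ultrafilter.of_le _
    have philim : ∀ w : H, ∃ c : ℂ, Tendsto (fun n => ⟪z n, w⟫) U (nhds c) := by
      intro w
      have hmem : Metric.closedBall (0:ℂ) (C * (C * ‖y‖) * ‖w‖) ∈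
          Ultrafilter.map (fun n => ⟪z n, w⟫) U := by
        apply Filter.mem_map.mpr
        apply Filter.univ_mem'
        intro n
        simp only [Set.mem_preimage, Metric.mem_closedBall, dist_zero_right]
        calc ‖⟪z n, w⟫‖ ≤ ‖z n‖ * ‖w‖ := norm_inner_le_norm _ _
          _ ≤ C * (C * ‖y‖) * ‖w‖ :=
            mul_le_mul_of_nonneg_right (hz_norm n) (norm_nonneg w)
      obtain ⟨c, _, hc⟩ := (isCompact_closedBall (0:ℂ) _).ultrafilter_le_nhds
        (Ultrafilter.map (fun n => ⟪z n, w⟫) U) (le_principal_iff.mpr hmem)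
      rw [Ultrafilter.coe_map] at hc
      exact ⟨c, hc⟩
    choose phi hphi using philim
    have phi_bound : ∀ w : H, ‖phi w‖ ≤ C * (C * ‖y‖) * ‖w‖ := by
      intro w
      refine le_of_tendsto ((hphi w).norm) (Filter.Eventually.of_forall fun n => ?_)
      calc ‖⟪z n, w⟫‖ ≤ ‖z n‖ * ‖w‖ := norm_inner_le_norm _ _
        _ ≤ C * (C * ‖y‖) * ‖w‖ :=
          mul_le_mul_of_nonneg_right (hz_norm n) (norm_nonneg w)
    have phi_add : ∀ w₁ w₂ : H, phi (w₁ + w₂) = phi w₁ + phi w₂ := by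
      intro w₁ w₂
      refine tendsto_nhds_unique (hphi (w₁ + w₂)) ?_
      have := (hphi w₁).add (hphi w₂)
      simpa [inner_add_right] using this
    have phi_smul : ∀ (c : ℂ) (w : H), phi (c • w) = c * phi w := by
      intro c w
      refine tendsto_nhds_unique (hphi (c • w)) ?_
      have := (hphi w).const_mul c
      simpa [inner_smul_right] using this
    let φL : H →ₗ[ℂ] ℂ :=
      { toFun := phi, map_add' := phi_add, map_smul' := phi_smul }
    let φC : H →L[ℂ] ℂ := LinearMap.mkContinuous φL (C * (C * ‖y‖)) phi_bound
    let x : H := (InnerProductSpace.toDual ℂ H).symm φC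
    have hxw : ∀ w : H, ⟪x, w⟫ = phi w := by
      intro w
      show ⟪(InnerProductSpace.toDual ℂ H).symm φC, w⟫ = phi w
      rw [InnerProductSpace.toDual_symm_apply]
      rfl
    have hxy : δ^2 ≤ (⟪x, y⟫).re := by
      rw [hxw y]
      have hre : Tendsto (fun n => (⟪z n, y⟫).re) U (nhds ((phi y).re)) :=
        (Complex.continuous_re.tendsto _).comp (hphi y)
      refine ge_of_tendsto hre (Filter.Eventually.of_forall fun n => ?_)
      rw [hzy n, ← Complex.ofReal_pow, Complex.ofReal_re]
      have := hlow n
      nlinarith [hδpos.le, norm_nonneg (a n)]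
    have hxne : x ≠ 0 := by
      intro h0
      rw [h0, inner_zero_left] at hxy
      simp only [Complex.zero_re] at hxy
      nlinarith [hδpos]
    have hbound : ∀ m : ℕ, ‖(Tinv ^ m) x‖ ≤ C * (C * ‖y‖) := by
      intro m
      set B : ℝ := ‖(Tinv ^ m) x‖ with hBdef
      set w : H := (adjoint (Tinv ^ m)) ((Tinv ^ m) x) with hwdef
      have hxw2 : ⟪x, w⟫ = ((B:ℂ))^2 := by
        rw [hwdef, adjoint_inner_right, inner_self_eq_norm_sq_to_K]
        norm_cast
      have hznw : ∀ n, ⟪z n, w⟫ = ⟪(Tinv ^ m) (z n), (Tinv ^ m) x⟫ := by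
        intro n; rw [hwdef, adjoint_inner_right]
      have hcancel : ∀ v : H, (Tinv ^ m) ((T ^ m) v) = v := by
        intro v
        have := congrArg (fun A : H →L[ℂ] H => A v) (hpow₂ m)
        simpa using this
      have hzm : ∀ n, m ≤ n → ‖(Tinv ^ m) (z n)‖ ≤ C * (C * ‖y‖) := by
        intro n hmn
        have hTn : (T ^ n) = (T ^ m) * (T ^ (n - m)) := by
          rw [← pow_add, Nat.add_sub_cancel' hmn]
        have hzn : z n = (T ^ m) ((T ^ (n - m)) (a n)) := by
          rw [hzdef]; simp only; rw [hTn]; rfl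
        rw [hzn, hcancel]
        calc ‖(T ^ (n-m)) (a n)‖ ≤ ‖T ^ (n-m)‖ * ‖a n‖ := le_opNorm _ _
          _ ≤ C * (C * ‖y‖) :=
            mul_le_mul (hCn _) (ha_norm n) (norm_nonneg _) hCpos.le
      have hBsq : B^2 ≤ C * (C * ‖y‖) * B := by
        have hlim : Tendsto (fun n => ‖⟪z n, w⟫‖) U (nhds ‖phi w‖) := (hphi w).norm
        have hev : ∀ᶠ n in (U : Filter ℕ), ‖⟪z n, w⟫‖ ≤ C * (C * ‖y‖) * B := by
          apply hU
          filter_upwards [eventually_ge_atTop m] with n hn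
          rw [hznw n]
          calc ‖⟪(Tinv ^ m) (z n), (Tinv ^ m) x⟫‖
              ≤ ‖(Tinv ^ m) (z n)‖ * B := norm_inner_le_norm _ _
            _ ≤ C * (C * ‖y‖) * B :=
              mul_le_mul_of_nonneg_right (hzm n hn) (norm_nonneg _)
        have h1 : ‖phi w‖ ≤ C * (C * ‖y‖) * B := le_of_tendsto hlim hev
        have h2 : ‖phi w‖ = B^2 := by
          rw [← hxw w, hxw2, norm_pow, Complex.norm_real, Real.norm_eq_abs,
            abs_of_nonneg (norm_nonneg _)]
        linarith [h2 ▸ h1]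
      nlinarith [norm_nonneg ((Tinv ^ m) x),
        mul_nonneg (mul_nonneg hCpos.le hCpos.le) (norm_nonneg y)]
    obtain ⟨m, hm⟩ := (tendsto_atTop.mp (h x hxne) (C * (C * ‖y‖) + 1)).exists
    linarith [hbound m]
end

section
/- Let T be a power-bounded operator on a complex separable Hilbert space H, let N := {x ∈ H : Tⁿx → 0}, and let K := N^⊥. Then N is a closed subspace invariant under T, the restriction T|_N is power-bounded of class C_{0·}, the compression T₂₂ := P_K T|_K (where P_K is the orthogonal projection onto K) is power-bounded, and T₂₂ is of class C_{1·}: for every f ∈ K, if T₂₂ⁿ f → 0 then f = 0. -/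
/-!
Power-boundedness makes `N = {x | Tⁿx → 0}` stable under approximation along orbits: if some
`Tᵐx` lies within `ε` of `N` for every `ε > 0`, then `x ∈ N`. With `m = 0` this is closedness
of `N`. For the compression, `Tⁿf - (PT)ⁿf ∈ N` by induction, so `(PT)ⁿf → 0` puts `f` in `N`;
and `(PT)ⁿf` is the `Nᗮ`-component of `Tⁿf`, whence `‖(PT)ⁿf‖ ≤ ‖Tⁿf‖`.
-/

open Filter Topology

section Normed

variable {𝕜 E : Type*} [NontriviallyNormedField 𝕜] [NormedAddCommGroup E] [NormedSpace 𝕜 E]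
  (T : E →L[𝕜] E)

def stableSubspace : Submodule 𝕜 E where
  carrier := {x | Tendsto (fun n => (T ^ n) x) atTop (𝓝 0)}
  add_mem' ha hb := by simpa only [Set.mem_ofPred_eq, map_add, add_zero] using ha.add hb
  zero_mem' := by simpa only [Set.mem_ofPred_eq, map_zero] using tendsto_const_nhds
  smul_mem' c _ hx := by simpa only [Set.mem_ofPred_eq, map_smul, smul_zero] using hx.const_smul c

theorem mem_stableSubspace {x : E} :
    x ∈ stableSubspace T ↔ Tendsto (fun n => (T ^ n) x) atTop (𝓝 0) :=
  Iff.rfl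

theorem pow_apply_mem_stableSubspace_iff (m : ℕ) {x : E} :
    (T ^ m) x ∈ stableSubspace T ↔ x ∈ stableSubspace T := by
  rw [mem_stableSubspace, mem_stableSubspace,
    ← tendsto_add_atTop_iff_nat m (f := fun n => (T ^ n) x)]
  simp only [pow_add, mul_apply_eq_comp]

theorem apply_mem_stableSubspace {x : E} (hx : x ∈ stableSubspace T) :
    T x ∈ stableSubspace T := by
  simpa only [pow_one] using (pow_apply_mem_stableSubspace_iff T 1).mpr hx

theorem compression_pow_apply_mem {K : Submodule 𝕜 E} {P : E →L[𝕜] E} (hP : ∀ x, P x ∈ K)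
    {x : E} (hx : x ∈ K) (n : ℕ) : ((P ∘L T) ^ n) x ∈ K := by
  cases n with
  | zero => simpa using hx
  | succ n => simpa only [pow_succ', mul_apply_eq_comp, ContinuousLinearMap.comp_apply] using hP _

variable {T}

theorem mem_stableSubspace_of_forall_exists_norm_sub_lt {C : ℝ} (hC : ∀ n, ‖T ^ n‖ ≤ C)
    {x : E} (h : ∀ ε > 0, ∃ m, ∃ y ∈ stableSubspace T, ‖(T ^ m) x - y‖ < ε) :
    x ∈ stableSubspace T := by
  have hC₀ : 0 ≤ C := (norm_nonneg _).trans (hC 0)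
  rw [mem_stableSubspace, NormedAddGroup.tendsto_nhds_zero]
  intro ε hε
  obtain ⟨m, y, hy, hxy⟩ := h (ε / (2 * (C + 1))) (by positivity)
  have hsmall : C * ‖(T ^ m) x - y‖ < ε / 2 := by
    rw [lt_div_iff₀ (by positivity)] at hxy
    nlinarith [norm_nonneg ((T ^ m) x - y)]
  rw [← map_add_atTop_eq_nat m, eventually_map]
  filter_upwards [NormedAddGroup.tendsto_nhds_zero.mp hy (ε / 2) (by positivity)] with n hn
  calc ‖(T ^ (n + m)) x‖ = ‖(T ^ n) y + (T ^ n) ((T ^ m) x - y)‖ := by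
        rw [← map_add, add_sub_cancel, pow_add, mul_apply_eq_comp]
    _ ≤ ‖(T ^ n) y‖ + C * ‖(T ^ m) x - y‖ :=
        norm_add_le_of_le le_rfl ((T ^ n).le_of_opNorm_le (hC n) _)
    _ < ε := by linarith

theorem isClosed_stableSubspace {C : ℝ} (hC : ∀ n, ‖T ^ n‖ ≤ C) :
    IsClosed (stableSubspace T : Set E) :=
  isClosed_of_closure_subset fun x hx ↦
    mem_stableSubspace_of_forall_exists_norm_sub_lt hC fun ε hε ↦ by
      obtain ⟨y, hy, hxy⟩ := Metric.mem_closure_iff.mp hx ε hε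
      exact ⟨0, y, hy, by simpa [dist_eq_norm] using hxy⟩

theorem pow_apply_sub_compression_pow_apply_mem {N : Submodule 𝕜 E} (hN : ∀ x ∈ N, T x ∈ N)
    {P : E →L[𝕜] E} (hP : ∀ x, x - P x ∈ N) (n : ℕ) (x : E) :
    (T ^ n) x - ((P ∘L T) ^ n) x ∈ N := by
  induction n with
  | zero => simp
  | succ n ih =>
    have hsplit : (T ^ (n + 1)) x - ((P ∘L T) ^ (n + 1)) x =
        T ((T ^ n) x - ((P ∘L T) ^ n) x) +
          (T (((P ∘L T) ^ n) x) - P (T (((P ∘L T) ^ n) x))) := by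
      simp only [pow_succ', mul_apply_eq_comp, ContinuousLinearMap.comp_apply, map_sub]
      abel
    rw [hsplit]
    exact N.add_mem (hN _ ih) (hP _)

theorem mem_stableSubspace_of_tendsto_compression_pow {C : ℝ} (hC : ∀ n, ‖T ^ n‖ ≤ C)
    {P : E →L[𝕜] E} (hP : ∀ x, x - P x ∈ stableSubspace T) {f : E}
    (hf : Tendsto (fun n => ((P ∘L T) ^ n) f) atTop (𝓝 0)) :
    f ∈ stableSubspace T :=
  mem_stableSubspace_of_forall_exists_norm_sub_lt hC fun ε hε ↦ by
    obtain ⟨m, hm⟩ := (NormedAddGroup.tendsto_nhds_zero.mp hf ε hε).exists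
    refine ⟨m, _, pow_apply_sub_compression_pow_apply_mem
      (fun _ ↦ apply_mem_stableSubspace T) hP m f, ?_⟩
    rwa [sub_sub_cancel]

end Normed

section InnerProduct

variable {𝕜 H : Type*} [RCLike 𝕜] [NormedAddCommGroup H] [InnerProductSpace 𝕜 H]

theorem norm_le_norm_add_of_mem_orthogonal {K : Submodule 𝕜 H} {u v : H} (hu : u ∈ K)
    (hv : v ∈ Kᗮ) : ‖v‖ ≤ ‖u + v‖ := by
  have := norm_add_sq_eq_norm_sq_add_norm_sq_of_inner_eq_zero u v
    ((K.mem_orthogonal v).mp hv u hu)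
  nlinarith [norm_nonneg u, norm_nonneg v, norm_nonneg (u + v)]

theorem norm_compression_pow_apply_le {N : Submodule 𝕜 H} {T P : H →L[𝕜] H}
    (hN : ∀ x ∈ N, T x ∈ N) (hPK : ∀ x, P x ∈ Nᗮ) (hPN : ∀ x, x - P x ∈ N) {f : H}
    (hf : f ∈ Nᗮ) (n : ℕ) : ‖((P ∘L T) ^ n) f‖ ≤ ‖(T ^ n) f‖ := by
  have := norm_le_norm_add_of_mem_orthogonal
    (pow_apply_sub_compression_pow_apply_mem hN hPN n f) (compression_pow_apply_mem T hPK hf n)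
  rwa [sub_add_cancel] at this

end InnerProduct

theorem stmt_11_general
    {H : Type*} [NormedAddCommGroup H] [InnerProductSpace ℂ H]
    (T : H →L[ℂ] H) (hT : ∃ C : ℝ, ∀ n : ℕ, ‖T ^ n‖ ≤ C) :
    ∃ N : Submodule ℂ H,
      (N : Set H) =
        {x : H | Filter.Tendsto (fun n : ℕ => (T ^ n) x) Filter.atTop (nhds 0)} ∧
      IsClosed (N : Set H) ∧
      (∀ x ∈ N, T x ∈ N) ∧
      (∃ C : ℝ, ∀ n : ℕ, ∀ x ∈ N, ‖(T ^ n) x‖ ≤ C * ‖x‖) ∧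
      (∀ x ∈ N, Filter.liminf (fun n : ℕ => ‖(T ^ n) x‖) Filter.atTop = 0) ∧
      (∀ P : H →L[ℂ] H, (∀ x : H, P x ∈ Nᗮ) → (∀ x : H, x - P x ∈ N) →
        ((∃ C : ℝ, ∀ n : ℕ, ∀ f ∈ Nᗮ, ‖((P ∘L T) ^ n) f‖ ≤ C * ‖f‖) ∧
         (∀ f ∈ Nᗮ, Filter.Tendsto (fun n : ℕ => ((P ∘L T) ^ n) f) Filter.atTop (nhds 0) →
            f = 0))) := by
  obtain ⟨C, hC⟩ := hT
  have hbound : ∀ n x, ‖(T ^ n) x‖ ≤ C * ‖x‖ := fun n x ↦ (T ^ n).le_of_opNorm_le (hC n) x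
  refine ⟨stableSubspace T, rfl, isClosed_stableSubspace hC,
    fun _ ↦ apply_mem_stableSubspace T, ⟨C, fun n x _ ↦ hbound n x⟩,
    fun x hx ↦ by simpa using (mem_stableSubspace T).mp hx |>.norm.liminf_eq,
    fun P hPK hPN ↦ ⟨⟨C, fun n f hf ↦ ?_⟩, fun f hf hlim ↦ ?_⟩⟩
  · exact (norm_compression_pow_apply_le (fun _ ↦ apply_mem_stableSubspace T) hPK hPN hf n).trans
      (hbound n f)
  · exact Submodule.disjoint_def.mp (stableSubspace T).orthogonal_disjoint f
      (mem_stableSubspace_of_tendsto_compression_pow hC hPN hlim) hf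

/-- Kérchy's lemma: For a power-bounded `T`, the set `N = {x | Tⁿx → 0}` is a
closed `T`-invariant subspace, `T|_N` is power-bounded of class `C₀.`, and for `K = Nᗮ` the
compression `T₂₂ = P_K T|_K` (realized as `P ∘L T` acting on `K`, where `P` is the orthogonal
projection onto `K`) is power-bounded and of class `C₁.`: `T₂₂ⁿ f → 0` implies `f = 0`. -/
theorem stmt_11
    {H : Type*} [NormedAddCommGroup H] [InnerProductSpace ℂ H] [CompleteSpace H]
    [TopologicalSpace.SeparableSpace H]
    (T : H →L[ℂ] H) (hT : ∃ C : ℝ, ∀ n : ℕ, ‖T ^ n‖ ≤ C) :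
    ∃ N : Submodule ℂ H,
      (N : Set H) =
        {x : H | Filter.Tendsto (fun n : ℕ => (T ^ n) x) Filter.atTop (nhds 0)} ∧
      IsClosed (N : Set H) ∧
      (∀ x ∈ N, T x ∈ N) ∧
      (∃ C : ℝ, ∀ n : ℕ, ∀ x ∈ N, ‖(T ^ n) x‖ ≤ C * ‖x‖) ∧
      (∀ x ∈ N, Filter.liminf (fun n : ℕ => ‖(T ^ n) x‖) Filter.atTop = 0) ∧
      (∀ P : H →L[ℂ] H, (∀ x : H, P x ∈ Nᗮ) → (∀ x : H, x - P x ∈ N) →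
        ((∃ C : ℝ, ∀ n : ℕ, ∀ f ∈ Nᗮ, ‖((P ∘L T) ^ n) f‖ ≤ C * ‖f‖) ∧
         (∀ f ∈ Nᗮ, Filter.Tendsto (fun n : ℕ => ((P ∘L T) ^ n) f) Filter.atTop (nhds 0) →
            f = 0))) :=
  stmt_11_general T hT
end

section
/- Let T be a power-bounded operator of class C_{·1} on a complex separable Hilbert space H. If every bounded backward sequence {xₙ} of T has constant norms ‖xₙ‖, then T is unitary. -/
open Filter ContinuousLinearMap Topology

noncomputable section Stmt14Aux

variable {H : Type*} [NormedAddCommGroup H] [InnerProductSpace ℂ H] [CompleteSpace H]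

local notation "⟪" x ", " y "⟫" => @inner ℂ _ _ x y

/-- An ultrafilter extending `atTop` on `ℕ`. -/
def s14F : Ultrafilter ℕ := Ultrafilter.of atTop

lemma s14F_le : (s14F : Filter ℕ) ≤ atTop := Ultrafilter.of_le _

lemma s14_exists_lim (a : ℕ → ℂ) (R : ℝ) (hR : ∀ m, ‖a m‖ ≤ R) :
    ∃ c : ℂ, Tendsto a (s14F : Filter ℕ) (𝓝 c) := by
  have h1 : ↑(s14F.map a) ≤ Filter.principal (Metric.closedBall (0:ℂ) R) := by
    rw [Ultrafilter.coe_map, le_principal_iff, mem_map]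
    filter_upwards with m
    simpa [Metric.mem_closedBall, dist_eq_norm] using hR m
  obtain ⟨c, -, hc⟩ := (isCompact_closedBall (0:ℂ) R).ultrafilter_le_nhds (s14F.map a) h1
  rw [Ultrafilter.coe_map] at hc
  exact ⟨c, hc⟩

/-- Cesàro averages of inner products of adjoint-power orbits. -/
def s14seq (T : H →L[ℂ] H) (z y : H) (m : ℕ) : ℂ :=
  (((m : ℂ) + 1))⁻¹ * ∑ k ∈ Finset.range (m + 1), ⟪(adjoint T ^ k) z, (adjoint T ^ k) y⟫

lemma s14_normAk (T : H →L[ℂ] H) {C : ℝ} (hC : ∀ n : ℕ, ‖T ^ n‖ ≤ C) (k : ℕ) :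
    ‖(adjoint T) ^ k‖ ≤ C := by
  rw [← star_eq_adjoint, ← star_pow, norm_star]
  exact hC k

lemma s14_norm_inv_nat (m : ℕ) : ‖(((m : ℂ) + 1))⁻¹‖ = (((m:ℝ)+1))⁻¹ := by
  rw [norm_inv]
  congr 1
  have : ((m : ℂ) + 1) = (((m : ℝ) + 1 : ℝ) : ℂ) := by push_cast; ring
  rw [this, Complex.norm_real, Real.norm_of_nonneg (by positivity)]

lemma s14seq_bound (T : H →L[ℂ] H) {C : ℝ} (hC : ∀ n : ℕ, ‖T ^ n‖ ≤ C) (z y : H) (m : ℕ) :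
    ‖s14seq T z y m‖ ≤ C ^ 2 * (‖z‖ * ‖y‖) := by
  have hC0 : 0 ≤ C := le_trans (norm_nonneg _) (hC 0)
  have hterm : ∀ k : ℕ, ‖⟪((adjoint T ^ k) z), ((adjoint T ^ k) y)⟫‖ ≤ C ^ 2 * (‖z‖ * ‖y‖) := by
    intro k
    calc ‖⟪((adjoint T ^ k) z), ((adjoint T ^ k) y)⟫‖
        ≤ ‖(adjoint T ^ k) z‖ * ‖(adjoint T ^ k) y‖ := norm_inner_le_norm _ _
      _ ≤ (C * ‖z‖) * (C * ‖y‖) := by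
          apply mul_le_mul _ _ (norm_nonneg _) (by positivity)
          · exact le_trans ((adjoint T ^ k).le_opNorm z)
              (mul_le_mul_of_nonneg_right (s14_normAk T hC k) (norm_nonneg _))
          · exact le_trans ((adjoint T ^ k).le_opNorm y)
              (mul_le_mul_of_nonneg_right (s14_normAk T hC k) (norm_nonneg _))
      _ = C ^ 2 * (‖z‖ * ‖y‖) := by ring
  calc ‖s14seq T z y m‖
      = ‖(((m : ℂ) + 1))⁻¹‖ * ‖∑ k ∈ Finset.range (m + 1), ⟪((adjoint T ^ k) z), ((adjoint T ^ k) y)⟫‖ :=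
        norm_mul _ _
    _ ≤ (((m:ℝ)+1))⁻¹ * ((m + 1 : ℕ) * (C ^ 2 * (‖z‖ * ‖y‖))) := by
        rw [s14_norm_inv_nat]
        apply mul_le_mul_of_nonneg_left _ (by positivity)
        calc ‖∑ k ∈ Finset.range (m + 1), ⟪((adjoint T ^ k) z), ((adjoint T ^ k) y)⟫‖
            ≤ ∑ k ∈ Finset.range (m + 1), ‖⟪((adjoint T ^ k) z), ((adjoint T ^ k) y)⟫‖ :=
              norm_sum_le _ _
          _ ≤ ∑ _k ∈ Finset.range (m + 1), C ^ 2 * (‖z‖ * ‖y‖) :=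
              Finset.sum_le_sum fun k _ => hterm k
          _ = (m + 1 : ℕ) * (C ^ 2 * (‖z‖ * ‖y‖)) := by
              rw [Finset.sum_const, Finset.card_range, nsmul_eq_mul]
    _ = C ^ 2 * (‖z‖ * ‖y‖) := by
        push_cast
        rw [← mul_assoc, inv_mul_cancel₀ (by positivity : ((m:ℝ)+1) ≠ 0), one_mul]

lemma s14_exists_Q (T : H →L[ℂ] H) (C : ℝ) (hC : ∀ n : ℕ, ‖T ^ n‖ ≤ C) :
    ∃ Q : H →ₗ[ℂ] H,
      (∀ w : H, T (Q ((adjoint T) w)) = Q w) ∧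
      (∀ z : H, ‖Q z‖ ≤ C ^ 2 * ‖z‖) ∧
      (∀ z : H, 0 < liminf (fun n : ℕ => ‖((adjoint T) ^ n) z‖) atTop → ⟪Q z, z⟫ ≠ 0) := by
  have hC0 : 0 ≤ C := le_trans (norm_nonneg _) (hC 0)
  set A := adjoint T with hA
  -- limits of the Cesàro averages along the ultrafilter
  have hex : ∀ z y : H, ∃ c : ℂ, Tendsto (s14seq T z y) (s14F : Filter ℕ) (𝓝 c) :=
    fun z y => s14_exists_lim _ _ (s14seq_bound T hC z y)
  choose qf hqf using hex
  -- additivity in each argument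
  have hadd1 : ∀ z z' y : H, qf (z + z') y = qf z y + qf z' y := by
    intro z z' y
    refine tendsto_nhds_unique (hqf (z + z') y) ?_
    have heq : s14seq T (z + z') y = fun m => s14seq T z y m + s14seq T z' y m := by
      funext m
      simp only [s14seq, map_add, inner_add_left, Finset.sum_add_distrib, mul_add]
    rw [heq]
    exact (hqf z y).add (hqf z' y)
  have hsmul1 : ∀ (c : ℂ) (z y : H), qf (c • z) y = (starRingEnd ℂ) c * qf z y := by
    intro c z y
    refine tendsto_nhds_unique (hqf (c • z) y) ?_
    have heq : s14seq T (c • z) y = fun m => (starRingEnd ℂ) c * s14seq T z y m := by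
      funext m
      simp only [s14seq, map_smul, inner_smul_left, ← Finset.mul_sum]
      ring
    rw [heq]
    exact (hqf z y).const_mul _
  have hadd2 : ∀ z y y' : H, qf z (y + y') = qf z y + qf z y' := by
    intro z y y'
    refine tendsto_nhds_unique (hqf z (y + y')) ?_
    have heq : s14seq T z (y + y') = fun m => s14seq T z y m + s14seq T z y' m := by
      funext m
      simp only [s14seq, map_add, inner_add_right, Finset.sum_add_distrib, mul_add]
    rw [heq]
    exact (hqf z y).add (hqf z y')
  have hsmul2 : ∀ (c : ℂ) (z y : H), qf z (c • y) = c * qf z y := by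
    intro c z y
    refine tendsto_nhds_unique (hqf z (c • y)) ?_
    have heq : s14seq T z (c • y) = fun m => c * s14seq T z y m := by
      funext m
      simp only [s14seq, map_smul, inner_smul_right, ← Finset.mul_sum]
      ring
    rw [heq]
    exact (hqf z y).const_mul _
  -- shift invariance
  have hshift : ∀ w y : H, qf (A w) (A y) = qf w y := by
    intro w y
    have hpow : ∀ (k : ℕ) (v : H), (A ^ k) (A v) = (A ^ (k + 1)) v := by
      intro k v
      rw [pow_succ]
      rfl
    have heq : ∀ m, s14seq T (A w) (A y) m - s14seq T w y m
        = (((m : ℂ) + 1))⁻¹ * (⟪(A ^ (m+1)) w, (A ^ (m+1)) y⟫ - ⟪(A ^ 0) w, (A ^ 0) y⟫) := by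
      intro m
      have h2 := Finset.sum_range_succ' (fun k => ⟪(A ^ k) w, (A ^ k) y⟫) (m + 1)
      have h3 := Finset.sum_range_succ (fun k => ⟪(A ^ k) w, (A ^ k) y⟫) (m + 1)
      simp only [s14seq, ← hA, hpow]
      linear_combination (((m : ℂ) + 1))⁻¹ * (h3 - h2)
    have hdiff : Tendsto (fun m => s14seq T (A w) (A y) m - s14seq T w y m) atTop (𝓝 0) := by
      apply squeeze_zero_norm
        (a := fun m : ℕ => (((m:ℝ)+1))⁻¹ * (C ^ 2 * (‖w‖ * ‖y‖) + ‖w‖ * ‖y‖))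
      · intro m
        rw [heq m, norm_mul, s14_norm_inv_nat]
        apply mul_le_mul_of_nonneg_left _ (by positivity)
        calc ‖⟪(A ^ (m+1)) w, (A ^ (m+1)) y⟫ - ⟪(A ^ 0) w, (A ^ 0) y⟫‖
            ≤ ‖⟪(A ^ (m+1)) w, (A ^ (m+1)) y⟫‖ + ‖⟪(A ^ 0) w, (A ^ 0) y⟫‖ := norm_sub_le _ _
          _ ≤ C ^ 2 * (‖w‖ * ‖y‖) + ‖w‖ * ‖y‖ := by
              apply add_le_add
              · calc ‖⟪(A ^ (m+1)) w, (A ^ (m+1)) y⟫‖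
                    ≤ ‖(A ^ (m+1)) w‖ * ‖(A ^ (m+1)) y‖ := norm_inner_le_norm _ _
                  _ ≤ (C * ‖w‖) * (C * ‖y‖) := by
                      apply mul_le_mul _ _ (norm_nonneg _) (by positivity)
                      · exact le_trans ((A ^ (m+1)).le_opNorm w)
                          (mul_le_mul_of_nonneg_right (s14_normAk T hC _) (norm_nonneg _))
                      · exact le_trans ((A ^ (m+1)).le_opNorm y)
                          (mul_le_mul_of_nonneg_right (s14_normAk T hC _) (norm_nonneg _))
                  _ = C ^ 2 * (‖w‖ * ‖y‖) := by ring
              · simp only [pow_zero, ContinuousLinearMap.one_apply]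
                exact norm_inner_le_norm _ _
      · have h0 : Tendsto (fun m : ℕ => (((m:ℝ)+1))⁻¹) atTop (𝓝 0) :=
          tendsto_inv_atTop_zero.comp
            (tendsto_atTop_add_const_right _ 1 tendsto_natCast_atTop_atTop)
        simpa using h0.mul_const (C ^ 2 * (‖w‖ * ‖y‖) + ‖w‖ * ‖y‖)
    have h5 : Tendsto (s14seq T (A w) (A y)) (s14F : Filter ℕ) (𝓝 (qf w y)) := by
      have h6 := (hqf w y).add (hdiff.mono_left s14F_le)
      have h7 : (fun m => s14seq T w y m + (s14seq T (A w) (A y) m - s14seq T w y m))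
          = s14seq T (A w) (A y) := by funext m; ring
      rw [h7] at h6
      simpa using h6
    exact tendsto_nhds_unique (hqf (A w) (A y)) h5
  -- Riesz representation
  have hbnd : ∀ z y : H, ‖qf z y‖ ≤ C ^ 2 * ‖z‖ * ‖y‖ := by
    intro z y
    refine le_of_tendsto (hqf z y).norm (Eventually.of_forall fun m => ?_)
    simpa [mul_assoc] using s14seq_bound T hC z y m
  have hrep : ∀ z : H, ∃ v : H, ∀ y : H, ⟪v, y⟫ = qf z y := by
    intro z
    let φ : H →ₗ[ℂ] ℂ :=
      { toFun := fun y => qf z y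
        map_add' := fun y y' => hadd2 z y y'
        map_smul' := fun c y => by simpa using hsmul2 c z y }
    refine ⟨(InnerProductSpace.toDual ℂ H).symm (φ.mkContinuous (C ^ 2 * ‖z‖)
      (fun y => hbnd z y)), fun y => ?_⟩
    rw [InnerProductSpace.toDual_symm_apply]
    rfl
  choose Qf hQf using hrep
  -- Q is linear
  have hQadd : ∀ z z' : H, Qf (z + z') = Qf z + Qf z' := by
    intro z z'
    apply ext_inner_right ℂ
    intro v
    rw [hQf, inner_add_left, hQf, hQf, hadd1]
  have hQsmul : ∀ (c : ℂ) (z : H), Qf (c • z) = c • Qf z := by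
    intro c z
    apply ext_inner_right ℂ
    intro v
    rw [hQf, inner_smul_left, hQf, hsmul1]
  have hQbound : ∀ z : H, ‖Qf z‖ ≤ C ^ 2 * ‖z‖ := by
    intro z
    have h1 : ‖Qf z‖ ^ 2 ≤ C ^ 2 * ‖z‖ * ‖Qf z‖ := by
      have h2 : (‖Qf z‖ : ℝ) ^ 2 = Complex.re ⟪Qf z, Qf z⟫ := by
        rw [inner_self_eq_norm_sq_to_K]
        norm_cast
      rw [h2]
      calc Complex.re ⟪Qf z, Qf z⟫ ≤ ‖⟪Qf z, Qf z⟫‖ := Complex.re_le_norm _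
        _ = ‖qf z (Qf z)‖ := by rw [hQf]
        _ ≤ C ^ 2 * ‖z‖ * ‖Qf z‖ := hbnd z (Qf z)
    rcases eq_or_lt_of_le (norm_nonneg (Qf z)) with h | h
    · rw [← h]; positivity
    · nlinarith [h1, h]
  -- intertwining: T (Q (A w)) = Q w
  have hTQ : ∀ w : H, T (Qf (A w)) = Qf w := by
    intro w
    apply ext_inner_right ℂ
    intro y
    have h1 : ⟪T (Qf (A w)), y⟫ = ⟪Qf (A w), A y⟫ := by
      rw [hA]
      exact (adjoint_inner_right T (Qf (adjoint T w)) y).symm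
    rw [h1, hQf, hshift, ← hQf]
  -- positivity
  have hpos : ∀ z : H, 0 < liminf (fun n : ℕ => ‖(A ^ n) z‖) atTop → ⟪Qf z, z⟫ ≠ 0 := by
    intro z hz
    set c := liminf (fun n : ℕ => ‖(A ^ n) z‖) atTop with hcdef
    have hcb : IsBoundedUnder (· ≤ ·) atTop (fun n : ℕ => ‖(A ^ n) z‖) := by
      refine isBoundedUnder_of ⟨C * ‖z‖, fun n => ?_⟩
      exact le_trans ((A ^ n).le_opNorm z)
        (mul_le_mul_of_nonneg_right (s14_normAk T hC n) (norm_nonneg _))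
    have hev : ∀ᶠ k in atTop, c / 2 < ‖(A ^ k) z‖ :=
      eventually_lt_of_lt_liminf (by rw [← hcdef]; linarith) (isBoundedUnder_of ⟨0, fun n => norm_nonneg _⟩)
    obtain ⟨K, hK⟩ := eventually_atTop.mp hev
    set d := (c / 2) ^ 2 with hddef
    have hd : 0 < d := by positivity
    have hre : ∀ m : ℕ, (s14seq T z z m).re
        = (((m:ℝ)+1))⁻¹ * ∑ k ∈ Finset.range (m + 1), ‖(A ^ k) z‖ ^ 2 := by
      intro m
      have h1 : s14seq T z z m
          = (((((m:ℝ)+1))⁻¹ * ∑ k ∈ Finset.range (m + 1), ‖(A ^ k) z‖ ^ 2 : ℝ) : ℂ) := by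
        simp only [s14seq, ← hA, inner_self_eq_norm_sq_to_K]
        push_cast
        norm_cast
      rw [h1, Complex.ofReal_re]
    have hlow : ∀ᶠ m in atTop, d / 2 ≤ (s14seq T z z m).re := by
      rw [eventually_atTop]
      refine ⟨2 * K, fun m hm => ?_⟩
      have hKm : K ≤ m + 1 := by omega
      have h3 : ((m + 1 - K : ℕ) : ℝ) * d ≤ ∑ k ∈ Finset.Ico K (m + 1), ‖(A ^ k) z‖ ^ 2 := by
        have := Finset.card_nsmul_le_sum (Finset.Ico K (m + 1))
          (fun k => ‖(A ^ k) z‖ ^ 2) d ?_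
        · rwa [Nat.card_Ico, nsmul_eq_mul] at this
        · intro k hk
          have hk1 := (Finset.mem_Ico.mp hk).1
          have := hK k hk1
          have hc2 : (0:ℝ) ≤ c / 2 := by linarith
          calc d = (c / 2) ^ 2 := hddef
            _ ≤ ‖(A ^ k) z‖ ^ 2 := by nlinarith
      have h4 : ∑ k ∈ Finset.Ico K (m + 1), ‖(A ^ k) z‖ ^ 2
          ≤ ∑ k ∈ Finset.range (m + 1), ‖(A ^ k) z‖ ^ 2 := by
        apply Finset.sum_le_sum_of_subset_of_nonneg
        · intro k hk
          rw [Finset.mem_range]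
          exact (Finset.mem_Ico.mp hk).2
        · intro k _ _
          positivity
      rw [hre m]
      have hcast : ((m + 1 - K : ℕ) : ℝ) = (m : ℝ) + 1 - K := by
        rw [Nat.cast_sub hKm]
        push_cast
        ring
      have hmK : (2 * K : ℝ) ≤ (m : ℝ) := by exact_mod_cast hm
      have hK0 : (0:ℝ) ≤ (K : ℝ) := Nat.cast_nonneg _
      have h5 : d / 2 ≤ (((m:ℝ)+1))⁻¹ * (((m + 1 - K : ℕ) : ℝ) * d) := by
        rw [hcast, inv_mul_eq_div, le_div_iff₀ (by positivity : (0:ℝ) < (m:ℝ)+1)]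
        nlinarith
      calc d / 2 ≤ (((m:ℝ)+1))⁻¹ * (((m + 1 - K : ℕ) : ℝ) * d) := h5
        _ ≤ (((m:ℝ)+1))⁻¹ * ∑ k ∈ Finset.range (m + 1), ‖(A ^ k) z‖ ^ 2 := by
            apply mul_le_mul_of_nonneg_left _ (by positivity)
            exact le_trans h3 h4
    have hlim2 : Tendsto (fun m => (s14seq T z z m).re) (s14F : Filter ℕ) (𝓝 (qf z z).re) :=
      (Complex.continuous_re.tendsto _).comp (hqf z z)
    have hge : d / 2 ≤ (qf z z).re :=
      ge_of_tendsto hlim2 (hlow.filter_mono s14F_le)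
    rw [hQf]
    intro h0
    rw [h0] at hge
    simp at hge
    linarith
  exact ⟨{ toFun := Qf, map_add' := hQadd, map_smul' := hQsmul }, hTQ, hQbound, hpos⟩

end Stmt14Aux

/-- A power-bounded operator of class `C·₁` all of whose bounded backward
sequences have constant norms is unitary (a surjective isometry). -/
theorem stmt_14
    {H : Type*} [NormedAddCommGroup H] [InnerProductSpace ℂ H] [CompleteSpace H]
    [TopologicalSpace.SeparableSpace H]
    (T : H →L[ℂ] H) (hT : ∃ C : ℝ, ∀ n : ℕ, ‖T ^ n‖ ≤ C)
    (hC1 : ∀ x : H, x ≠ 0 →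
      0 < Filter.liminf (fun n : ℕ => ‖((ContinuousLinearMap.adjoint T) ^ n) x‖) Filter.atTop)
    (hconst : ∀ xs : ℕ → H, (∀ n : ℕ, T (xs (n + 1)) = xs n) →
      (∃ C : ℝ, ∀ n : ℕ, ‖xs n‖ ≤ C) → ∀ n : ℕ, ‖xs n‖ = ‖xs 0‖) :
    (∀ x : H, ‖T x‖ = ‖x‖) ∧ Function.Surjective T := by
  classical
  obtain ⟨C, hC⟩ := hT
  obtain ⟨Q, hTQ, hQb, hQpos⟩ := s14_exists_Q T C hC
  set A := ContinuousLinearMap.adjoint T with hA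
  have hC0 : 0 ≤ C := le_trans (norm_nonneg _) (hC 0)
  have hAk : ∀ k : ℕ, ‖(A ^ k : H →L[ℂ] H)‖ ≤ C := fun k => s14_normAk T hC k
  -- key: ‖T (Q z)‖ = ‖Q z‖ for every z, via a bounded backward sequence
  have key : ∀ z : H, ‖T (Q z)‖ = ‖Q z‖ := by
    intro z
    set xs : ℕ → H := fun n => Nat.casesOn n (T (Q z)) (fun k => Q ((A ^ k) z)) with hxs
    have hbk : ∀ n : ℕ, T (xs (n + 1)) = xs n := by
      intro n
      cases n with
      | zero => simp [hxs]
      | succ k =>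
        show T (Q ((A ^ (k+1)) z)) = Q ((A ^ k) z)
        have : (A ^ (k+1)) z = A ((A ^ k) z) := by rw [pow_succ']; rfl
        rw [this]
        exact hTQ ((A ^ k) z)
    have hbd : ∃ B : ℝ, ∀ n : ℕ, ‖xs n‖ ≤ B := by
      refine ⟨‖T‖ * (C ^ 2 * ‖z‖) + C ^ 2 * (C * ‖z‖), fun n => ?_⟩
      cases n with
      | zero =>
        have h1 : ‖T (Q z)‖ ≤ ‖T‖ * (C ^ 2 * ‖z‖) :=
          le_trans (T.le_opNorm _) (mul_le_mul_of_nonneg_left (hQb z) (norm_nonneg T))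
        have h2 : (0:ℝ) ≤ C ^ 2 * (C * ‖z‖) := by positivity
        calc ‖xs 0‖ = ‖T (Q z)‖ := rfl
          _ ≤ ‖T‖ * (C ^ 2 * ‖z‖) + C ^ 2 * (C * ‖z‖) := by linarith
      | succ k =>
        have h1 : ‖Q ((A ^ k) z)‖ ≤ C ^ 2 * (C * ‖z‖) := by
          refine le_trans (hQb _) ?_
          apply mul_le_mul_of_nonneg_left _ (by positivity)
          exact le_trans ((A ^ k).le_opNorm z)
            (mul_le_mul_of_nonneg_right (hAk k) (norm_nonneg _))
        have h2 : (0:ℝ) ≤ ‖T‖ * (C ^ 2 * ‖z‖) := by positivity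
        calc ‖xs (k+1)‖ = ‖Q ((A ^ k) z)‖ := rfl
          _ ≤ ‖T‖ * (C ^ 2 * ‖z‖) + C ^ 2 * (C * ‖z‖) := by linarith
    have h1 := hconst xs hbk hbd 1
    have h2 : xs 1 = Q z := by
      show Q ((A ^ 0) z) = Q z
      rw [pow_zero]
      rfl
    have h3 : xs 0 = T (Q z) := rfl
    rw [h2, h3] at h1
    exact h1.symm
  -- density of the range of Q
  set Rng : Submodule ℂ H := LinearMap.range Q with hRng
  have hbot : Rngᗮ = ⊥ := by
    rw [Submodule.eq_bot_iff]
    intro y hy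
    by_contra hy0
    have h1 := hQpos y (hC1 y hy0)
    have h2 := (Submodule.mem_orthogonal Rng y).mp hy (Q y) ⟨y, rfl⟩
    exact h1 h2
  have hclos : closure (Rng : Set H) = Set.univ := by
    have h1 : Rng.topologicalClosure = ⊤ := Submodule.topologicalClosure_eq_top_iff.mpr hbot
    have h2 : (Rng.topologicalClosure : Set H) = closure (Rng : Set H) := rfl
    rw [← h2, h1]
    rfl
  have hiso : ∀ x : H, ‖T x‖ = ‖x‖ := by
    intro x
    have hE : IsClosed {v : H | ‖T v‖ = ‖v‖} :=
      isClosed_eq (T.continuous.norm) continuous_norm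
    have hsub : (Rng : Set H) ⊆ {v : H | ‖T v‖ = ‖v‖} := by
      rintro v ⟨w, rfl⟩
      exact key w
    have : closure (Rng : Set H) ⊆ {v : H | ‖T v‖ = ‖v‖} := closure_minimal hsub hE
    exact this (by rw [hclos]; trivial)
  refine ⟨hiso, ?_⟩
  have hisom : Isometry T := AddMonoidHomClass.isometry_of_norm T hiso
  have hcr : IsClosed (Set.range T) := hisom.isClosedEmbedding.isClosed_range
  intro x
  have hsub : (Rng : Set H) ⊆ Set.range T := by
    rintro v ⟨w, rfl⟩
    exact ⟨Q (A w), hTQ w⟩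
  have h1 : x ∈ closure (Set.range T) := by
    have := closure_mono hsub
    rw [hclos] at this
    exact this trivial
  rwa [hcr.closure_eq] at h1
end

section
/- Let V be the Volterra operator on L²([0,1], ℂ). Then I − V is power-bounded: sup_{n∈ℕ} ‖(I − V)ⁿ‖ < ∞. -/
open MeasureTheory Filter

/-- Lebesgue measure restricted to `[0,1]`. -/
noncomputable def μ01 : MeasureTheory.Measure ℝ :=
  MeasureTheory.volume.restrict (Set.Icc (0 : ℝ) 1)

/-!
`V` is accretive: by Fubini, `2 Re ⟪V f, f⟫ = |∫₀¹ f|² ≥ 0`, hence `‖f‖ ≤ ‖(1 + V) f‖`.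
Integrating by parts against `e⁻ᵗ` shows that the multiplication operator `M` by `eᵗ` satisfies
`(1 + V) M⁻¹ (1 - V) M = 1`. So `A = M⁻¹ (1 - V) M` is a right inverse of the expanding map
`1 + V`, hence a contraction, and `(1 - V)ⁿ = M Aⁿ M⁻¹` has norm at most `‖M‖ ‖M⁻¹‖`.
-/

open Set ComplexConjugate
open scoped ENNReal InnerProductSpace

namespace Volterra

lemma one_add_mul_mul_one_sub_eq {R : Type*} [Ring R] {v m : R}
    (h : v * m * v = v * m - m * v) : (1 + v) * m * (1 - v) = m := by
  calc (1 + v) * m * (1 - v) = m + (v * m - m * v) - v * m * v := by noncomm_ring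
    _ = m := by rw [h, add_sub_cancel_right]

lemma norm_conj_pow_le {R : Type*} [NormedRing R] (u : Rˣ) {a : R} (ha : ∀ n : ℕ, ‖a ^ n‖ ≤ 1)
    (n : ℕ) : ‖((u : R) * a * (↑u⁻¹ : R)) ^ n‖ ≤ ‖(u : R)‖ * ‖(↑u⁻¹ : R)‖ := by
  calc ‖((u : R) * a * (↑u⁻¹ : R)) ^ n‖ = ‖(u : R) * a ^ n * (↑u⁻¹ : R)‖ := by
        rw [Units.conj_pow]
    _ ≤ ‖(u : R)‖ * ‖a ^ n‖ * ‖(↑u⁻¹ : R)‖ := norm_mul₃_le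
    _ ≤ ‖(u : R)‖ * 1 * ‖(↑u⁻¹ : R)‖ := by gcongr; exact ha n
    _ = ‖(u : R)‖ * ‖(↑u⁻¹ : R)‖ := by rw [mul_one]

lemma norm_pow_le_one_of_mul_eq_one {𝕜 E : Type*} [NontriviallyNormedField 𝕜]
    [SeminormedAddCommGroup E] [NormedSpace 𝕜 E] {A B : E →L[𝕜] E}
    (hB : ∀ x, ‖x‖ ≤ ‖B x‖) (hBA : B * A = 1) (n : ℕ) : ‖A ^ n‖ ≤ 1 := by
  have hA : ‖A‖ ≤ 1 := A.opNorm_le_bound zero_le_one fun x ↦ by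
    simpa [← mul_apply_eq_comp, hBA] using hB (A x)
  rcases n.eq_zero_or_pos with rfl | hn
  · exact ContinuousLinearMap.norm_id_le
  · exact (norm_pow_le' A hn).trans (pow_le_one₀ (norm_nonneg A) hA)

lemma norm_le_norm_add_of_re_inner_nonneg {𝕜 E : Type*} [RCLike 𝕜] [SeminormedAddCommGroup E]
    [InnerProductSpace 𝕜 E] {x y : E} (h : 0 ≤ RCLike.re ⟪y, x⟫_𝕜) : ‖x‖ ≤ ‖x + y‖ := by
  refine (sq_le_sq₀ (norm_nonneg _) (norm_nonneg _)).1 ?_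
  rw [norm_add_sq (𝕜 := 𝕜), inner_re_symm]
  nlinarith [norm_nonneg y]

section Triangle

variable {μ : Measure ℝ} {g h : ℝ → ℂ}

noncomputable def triangleMul (g h : ℝ → ℂ) : ℝ × ℝ → ℂ :=
  {p : ℝ × ℝ | p.2 ≤ p.1}.indicator fun p ↦ g p.1 * h p.2

lemma integrable_triangleMul (hg : Integrable g μ) (hh : Integrable h μ) :
    Integrable (triangleMul g h) (μ.prod μ) :=
  (hg.mul_prod hh).indicator (measurableSet_le measurable_snd measurable_fst)

lemma integral_triangleMul_left (t : ℝ) :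
    ∫ s, triangleMul g h (t, s) ∂μ = g t * ∫ s in Iic t, h s ∂μ := by
  rw [← integral_const_mul, ← integral_indicator measurableSet_Iic]
  congr with s

lemma integral_triangleMul_right (s : ℝ) :
    ∫ t, triangleMul g h (t, s) ∂μ = (∫ t in Ici s, g t ∂μ) * h s := by
  rw [← integral_mul_const, ← integral_indicator measurableSet_Ici]
  congr with t

variable [SFinite μ]

lemma integrable_mul_setIntegral_Iic (hg : Integrable g μ) (hh : Integrable h μ) :
    Integrable (fun t ↦ g t * ∫ s in Iic t, h s ∂μ) μ := by
  simpa only [integral_triangleMul_left] using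
    (integrable_triangleMul hg hh).integral_prod_left

lemma integrable_setIntegral_Ici_mul (hg : Integrable g μ) (hh : Integrable h μ) :
    Integrable (fun s ↦ (∫ t in Ici s, g t ∂μ) * h s) μ := by
  simpa only [integral_triangleMul_right] using
    (integrable_triangleMul hg hh).integral_prod_right

lemma integral_mul_setIntegral_Iic (hg : Integrable g μ) (hh : Integrable h μ) :
    ∫ t, g t * (∫ s in Iic t, h s ∂μ) ∂μ = ∫ s, (∫ t in Ici s, g t ∂μ) * h s ∂μ := by
  have hk := integrable_triangleMul hg hh
  simp only [← integral_triangleMul_left, ← integral_triangleMul_right, ← integral_prod _ hk,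
    integral_prod_symm _ hk]

lemma integral_conj_primitive_mul_add_conj [NullSingletonClass μ] {f : ℝ → ℂ}
    (hf : Integrable f μ) :
    (∫ x, conj (∫ s in Iic x, f s ∂μ) * f x ∂μ) + conj (∫ x, conj (∫ s in Iic x, f s ∂μ) * f x ∂μ)
      = conj (∫ x, f x ∂μ) * ∫ x, f x ∂μ := by
  have hf' : Integrable (fun x ↦ conj (f x)) μ := by
    simpa using Complex.conjCLE.toContinuousLinearMap.integrable_comp hf
  have hsplit (s : ℝ) : (∫ t in Ici s, f t ∂μ) + ∫ t in Iic s, f t ∂μ = ∫ t, f t ∂μ := by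
    rw [add_comm, integral_Ici_eq_integral_Ioi, ← compl_Iic]
    exact integral_add_compl measurableSet_Iic hf
  have hI : ∫ x, conj (∫ s in Iic x, f s ∂μ) * f x ∂μ
      = ∫ s, (∫ t in Ici s, f t ∂μ) * conj (f s) ∂μ := by
    simp_rw [← integral_conj, mul_comm _ (f _)]
    exact integral_mul_setIntegral_Iic hf hf'
  have hconjI : conj (∫ x, conj (∫ s in Iic x, f s ∂μ) * f x ∂μ)
      = ∫ s, conj (f s) * ∫ t in Iic s, f t ∂μ ∂μ := by
    simp [← integral_conj, mul_comm]
  rw [hconjI, hI, ← integral_add (integrable_setIntegral_Ici_mul hf hf')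
    (integrable_mul_setIntegral_Iic hf' hf), ← integral_conj, ← integral_mul_const]
  refine integral_congr_ae (.of_forall fun s ↦ ?_)
  simp only [← hsplit s]
  ring

end Triangle

section UnitInterval

instance : IsFiniteMeasure μ01 := by unfold μ01; infer_instance

instance : NullSingletonClass μ01 := by unfold μ01; infer_instance

lemma ae_mem_Icc_μ01 : ∀ᵐ x ∂μ01, x ∈ Icc (0 : ℝ) 1 :=
  ae_restrict_mem measurableSet_Icc

lemma restrict_μ01_Icc_eq_Iic (x : ℝ) : μ01.restrict (Icc 0 x) = μ01.restrict (Iic x) := by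
  simp only [μ01, Measure.restrict_restrict measurableSet_Icc,
    Measure.restrict_restrict measurableSet_Iic]
  congr 1
  ext t
  simp only [mem_inter_iff, mem_Icc, mem_Iic]
  tauto

lemma setIntegral_Icc_μ01_eq_sub {w w' : ℝ → ℂ} (hw : ∀ t, HasDerivAt w (w' t) t)
    (hw' : Continuous w') {s x : ℝ} (hs : 0 ≤ s) (hsx : s ≤ x) (hx : x ≤ 1) :
    ∫ t in Icc s x, w' t ∂μ01 = w x - w s := by
  have hsub : Icc s x ⊆ Icc 0 1 := Icc_subset_Icc hs hx
  rw [μ01, Measure.restrict_restrict measurableSet_Icc, inter_eq_left.2 hsub,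
    integral_Icc_eq_integral_Ioc, ← intervalIntegral.integral_of_le hsx,
    intervalIntegral.integral_eq_sub_of_hasDerivAt (fun t _ ↦ hw t) (hw'.intervalIntegrable _ _)]

lemma setIntegral_deriv_mul_primitive {w w' : ℝ → ℂ} (hw : ∀ t, HasDerivAt w (w' t) t)
    (hw' : Continuous w') {f : ℝ → ℂ} (hf : Integrable f μ01) {x : ℝ} (hx : x ≤ 1) :
    ∫ t in Iic x, w' t * (∫ s in Iic t, f s ∂μ01) ∂μ01
      = w x * (∫ s in Iic x, f s ∂μ01) - ∫ s in Iic x, w s * f s ∂μ01 := by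
  have hg : Integrable ((Iic x).indicator w') μ01 :=
    (hw'.integrableOn_Icc (a := 0) (b := 1)).indicator measurableSet_Iic
  have hwc : Continuous w := continuous_iff_continuousAt.2 fun t ↦ (hw t).continuousAt
  have hwf : Integrable (fun s ↦ w s * f s) μ01 :=
    IntegrableOn.continuousOn_mul hwc.continuousOn hf isCompact_Icc
  have hinner : ∀ᵐ s ∂μ01, (∫ t in Ici s, (Iic x).indicator w' t ∂μ01) * f s
      = (Iic x).indicator (fun s ↦ (w x - w s) * f s) s := by
    filter_upwards [ae_mem_Icc_μ01] with s hs
    rw [integral_indicator measurableSet_Iic, Measure.restrict_restrict measurableSet_Iic,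
      Iic_inter_Ici]
    by_cases hsx : s ≤ x
    · rw [setIntegral_Icc_μ01_eq_sub hw hw' hs.1 hsx hx, indicator_of_mem (mem_Iic.2 hsx)]
    · rw [Icc_eq_empty hsx, Measure.restrict_empty, integral_zero_measure,
        indicator_of_notMem (mem_Iic.not.2 hsx), zero_mul]
  calc ∫ t in Iic x, w' t * (∫ s in Iic t, f s ∂μ01) ∂μ01
      = ∫ t, (Iic x).indicator w' t * (∫ s in Iic t, f s ∂μ01) ∂μ01 := by
        rw [← integral_indicator measurableSet_Iic]
        simp only [indicator_mul_left]
    _ = ∫ s in Iic x, (w x - w s) * f s ∂μ01 := by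
        rw [integral_mul_setIntegral_Iic hg hf, integral_congr_ae hinner,
          integral_indicator measurableSet_Iic]
    _ = w x * (∫ s in Iic x, f s ∂μ01) - ∫ s in Iic x, w s * f s ∂μ01 := by
        simp only [sub_mul]
        rw [integral_sub (hf.restrict.const_mul _) hwf.restrict, integral_const_mul]

end UnitInterval

local notation "L²" => Lp ℂ 2 μ01

section MulOp

lemma memLp_top_μ01 (w : C(ℝ, ℂ)) : MemLp w ∞ μ01 := by
  obtain ⟨C, hC⟩ :=
    (isCompact_Icc (a := (0 : ℝ)) (b := 1)).exists_bound_of_continuousOn w.continuous.continuousOn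
  exact memLp_top_of_bound w.continuous.aestronglyMeasurable C
    (by filter_upwards [ae_mem_Icc_μ01] with t ht using hC t ht)

noncomputable def mulOp (w : C(ℝ, ℂ)) : L² →L[ℂ] L² :=
  (ContinuousLinearMap.mul ℂ ℂ).holderL μ01 ∞ 2 2 (memLp_top_μ01 w).toLp

lemma mulOp_apply_ae (w : C(ℝ, ℂ)) (f : L²) : mulOp w f =ᵐ[μ01] fun t ↦ w t * f t := by
  filter_upwards [ContinuousLinearMap.coeFn_holder (r := 2) (ContinuousLinearMap.mul ℂ ℂ)
    (memLp_top_μ01 w).toLp f, (memLp_top_μ01 w).coeFn_toLp] with t h1 h2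
  rw [mulOp, ContinuousLinearMap.holderL_apply_apply, h1, ContinuousLinearMap.mul_apply', h2]

lemma mulOp_mul (w v : C(ℝ, ℂ)) : mulOp (w * v) = mulOp w * mulOp v := by
  ext1 f
  refine Lp.ext ?_
  filter_upwards [mulOp_apply_ae (w * v) f, mulOp_apply_ae w (mulOp v f), mulOp_apply_ae v f]
    with t h1 h2 h3
  rw [mul_apply_eq_comp, h1, h2, h3, ContinuousMap.mul_apply, mul_assoc]

lemma mulOp_one : mulOp 1 = 1 := by
  ext1 f
  refine Lp.ext ?_
  filter_upwards [mulOp_apply_ae 1 f] with t ht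
  rw [ht, ContinuousMap.one_apply, one_mul, one_apply_eq_self]

noncomputable def expWeight (c : ℂ) : C(ℝ, ℂ) := ⟨fun t ↦ Complex.exp (c * t), by fun_prop⟩

lemma hasDerivAt_expWeight (c : ℂ) (t : ℝ) :
    HasDerivAt (expWeight c) (c * expWeight c t) t := by
  simpa [expWeight, mul_comm] using ((hasDerivAt_id t).ofReal_comp.const_mul c).cexp

lemma expWeight_mul_expWeight_neg (c : ℂ) : expWeight c * expWeight (-c) = 1 := by
  ext t
  simp [expWeight, ← Complex.exp_add]

noncomputable def expMulUnit (c : ℂ) : (L² →L[ℂ] L²)ˣ where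
  val := mulOp (expWeight c)
  inv := mulOp (expWeight (-c))
  val_inv := by rw [← mulOp_mul, expWeight_mul_expWeight_neg, mulOp_one]
  inv_val := by rw [← mulOp_mul, mul_comm, expWeight_mul_expWeight_neg, mulOp_one]

end MulOp

section Operator

variable {V : L² →L[ℂ] L²}
  (hV : ∀ f : L², ∀ᵐ x ∂μ01, (V f : ℝ → ℂ) x = ∫ t in Icc (0 : ℝ) x, f t ∂μ01)
include hV

lemma volterra_apply_ae (f : L²) : V f =ᵐ[μ01] fun x ↦ ∫ t in Iic x, f t ∂μ01 := by
  filter_upwards [hV f] with x hx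
  rw [hx, restrict_μ01_Icc_eq_Iic]

lemma re_inner_volterra_self_nonneg (f : L²) : 0 ≤ RCLike.re ⟪V f, f⟫_ℂ := by
  have hf : Integrable f μ01 := (Lp.memLp f).integrable one_le_two
  have hI : ⟪V f, f⟫_ℂ = ∫ x, conj (∫ s in Iic x, f s ∂μ01) * f x ∂μ01 := by
    rw [L2.inner_def]
    refine integral_congr_ae ?_
    filter_upwards [volterra_apply_ae hV f] with x hx
    rw [RCLike.inner_apply, hx, mul_comm]
  have hsum := integral_conj_primitive_mul_add_conj hf
  rw [← hI, Complex.add_conj, ← Complex.normSq_eq_conj_mul_self] at hsum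
  have hre : 2 * (⟪V f, f⟫_ℂ).re = Complex.normSq (∫ x, f x ∂μ01) := by exact_mod_cast hsum
  change 0 ≤ (⟪V f, f⟫_ℂ).re
  linarith [Complex.normSq_nonneg (∫ x, f x ∂μ01)]

lemma smul_volterra_mul_mulOp_expWeight_mul_volterra (c : ℂ) :
    c • (V * mulOp (expWeight c) * V)
      = mulOp (expWeight c) * V - V * mulOp (expWeight c) := by
  set M := mulOp (expWeight c)
  ext1 f
  refine Lp.ext ?_
  have hf : Integrable f μ01 := (Lp.memLp f).integrable one_le_two
  have hMVf : ∀ᵐ t ∂μ01, M (V f) t = expWeight c t * ∫ s in Iic t, f s ∂μ01 := by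
    filter_upwards [mulOp_apply_ae (expWeight c) (V f), volterra_apply_ae hV f] with t h1 h2
    rw [h1, h2]
  have hMf := mulOp_apply_ae (expWeight c) f
  filter_upwards [Lp.coeFn_smul c ((V * M * V) f), Lp.coeFn_sub ((M * V) f) ((V * M) f),
    volterra_apply_ae hV (M (V f)), volterra_apply_ae hV (M f), hMVf, ae_mem_Icc_μ01]
    with x hsmul hsub hVMV hVM hMV hx
  rw [smul_apply, sub_apply, hsmul, hsub, Pi.smul_apply, Pi.sub_apply, mul_apply_eq_comp,
    mul_apply_eq_comp, mul_apply_eq_comp, mul_apply_eq_comp, hVMV, hVM, hMV, smul_eq_mul,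
    integral_congr_ae (ae_restrict_of_ae hMVf), integral_congr_ae (ae_restrict_of_ae hMf),
    ← integral_const_mul]
  simp_rw [← mul_assoc]
  exact setIntegral_deriv_mul_primitive (hasDerivAt_expWeight c) (by fun_prop) hf hx.2

lemma one_add_volterra_mul_conj_one_sub_volterra :
    (1 + V) * ((↑(expMulUnit 1)⁻¹ : L² →L[ℂ] L²) * (1 - V) * ↑(expMulUnit 1)) = 1 := by
  have h : (1 + V) * mulOp (expWeight (-1)) * (1 - V) = mulOp (expWeight (-1)) := by
    refine one_add_mul_mul_one_sub_eq ?_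
    rw [← neg_sub, ← smul_volterra_mul_mulOp_expWeight_mul_volterra hV, neg_one_smul, neg_neg]
  calc (1 + V) * ((↑(expMulUnit 1)⁻¹ : L² →L[ℂ] L²) * (1 - V) * ↑(expMulUnit 1))
      = (1 + V) * mulOp (expWeight (-1)) * (1 - V) * ↑(expMulUnit 1) := by
        simp only [expMulUnit, Units.inv_mk, mul_assoc]
    _ = 1 := by rw [h]; exact (expMulUnit 1).inv_mul

end Operator

end Volterra

open Volterra

/-- If `V` is the Volterra operator on `L²([0,1], ℂ)`, i.e. the bounded operator
with `(Vf)(x) = ∫₀ˣ f(t) dt` a.e., then `I − V` is power-bounded. -/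
theorem stmt_15
    (V : MeasureTheory.Lp ℂ 2 μ01 →L[ℂ] MeasureTheory.Lp ℂ 2 μ01)
    (hV : ∀ f : MeasureTheory.Lp ℂ 2 μ01,
      ∀ᵐ x ∂μ01, (V f : ℝ → ℂ) x = ∫ t in Set.Icc (0 : ℝ) x, f t ∂μ01) :
    ∃ C : ℝ, ∀ n : ℕ, ‖(1 - V) ^ n‖ ≤ C := by
  have hexpand (f : Lp ℂ 2 μ01) : ‖f‖ ≤ ‖(1 + V) f‖ :=
    norm_le_norm_add_of_re_inner_nonneg (re_inner_volterra_self_nonneg hV f)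
  have hcontract := norm_pow_le_one_of_mul_eq_one hexpand
    (one_add_volterra_mul_conj_one_sub_volterra hV)
  refine ⟨‖(expMulUnit 1 : Lp ℂ 2 μ01 →L[ℂ] Lp ℂ 2 μ01)‖
    * ‖(↑(expMulUnit 1)⁻¹ : Lp ℂ 2 μ01 →L[ℂ] Lp ℂ 2 μ01)‖, fun n ↦ ?_⟩
  simpa [mul_assoc] using norm_conj_pow_le (expMulUnit 1) hcontract n
end

section
/- Let V be the Volterra operator on L²([0,1], ℂ). Then ‖(I + V)ⁿ f‖ → ∞ as n → ∞ for every nonzero f ∈ L²([0,1], ℂ). -/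
/-!
For `u ∈ L²`, Fubini on the two triangles of `[0,1]²` gives `2 Re ⟪u, V u⟫ = |∫ u|² ≥ 0`,
so `V` is accretive and `‖(I + V) u‖² ≥ ‖u‖² + ‖V u‖²`. As `V` commutes with `(I + V)ⁿ`,
iterating gives `‖(I + V)ⁿ f‖² ≥ ‖f‖² + n ‖V f‖²`. Finally `V f ≠ 0` for `f ≠ 0`: the primitive
of `f` is continuous, so if it vanishes a.e. it vanishes on every half-line `(-∞, x]`, and these
form a π-system generating the Borel sets.
-/

open MeasureTheory Filter

open Set
open scoped InnerProductSpace Topology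

namespace ContinuousLinearMap

variable {𝕜 E : Type*} [RCLike 𝕜] [NormedAddCommGroup E] [InnerProductSpace 𝕜 E]

def IsAccretive (T : E →L[𝕜] E) : Prop :=
  ∀ u, 0 ≤ RCLike.re ⟪u, T u⟫_𝕜

variable {T : E →L[𝕜] E}

theorem IsAccretive.norm_sq_add_norm_sq_le (hT : T.IsAccretive) (u : E) :
    ‖u‖ ^ 2 + ‖T u‖ ^ 2 ≤ ‖u + T u‖ ^ 2 := by
  rw [norm_add_sq (𝕜 := 𝕜)]
  linarith [hT u]

theorem IsAccretive.norm_le_norm_one_add_apply (hT : T.IsAccretive) (u : E) :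
    ‖u‖ ≤ ‖(1 + T) u‖ :=
  le_of_pow_le_pow_left₀ two_ne_zero (norm_nonneg _) <|
    (le_add_of_nonneg_right (sq_nonneg _)).trans (hT.norm_sq_add_norm_sq_le u)

theorem IsAccretive.norm_le_norm_one_add_pow_apply (hT : T.IsAccretive) (n : ℕ) (u : E) :
    ‖u‖ ≤ ‖((1 + T) ^ n) u‖ := by
  induction n with
  | zero => simp
  | succ n ih => exact ih.trans <| by rw [pow_succ']; exact hT.norm_le_norm_one_add_apply _

theorem IsAccretive.norm_sq_add_mul_le_norm_one_add_pow_apply_sq (hT : T.IsAccretive) (f : E)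
    (n : ℕ) :
    ‖f‖ ^ 2 + n * ‖T f‖ ^ 2 ≤ ‖((1 + T) ^ n) f‖ ^ 2 := by
  induction n with
  | zero => simp
  | succ n ih =>
    set v := ((1 + T) ^ n) f
    have hTv : T v = ((1 + T) ^ n) (T f) := by
      have hcomm : Commute T ((1 + T) ^ n) :=
        ((Commute.one_right T).add_right (Commute.refl T)).pow_right n
      exact congrArg (· f) hcomm.eq
    have hstep : ((1 + T) ^ (n + 1)) f = v + T v := by
      rw [pow_succ']; rfl
    have hgrow : ‖T f‖ ≤ ‖T v‖ := hTv ▸ hT.norm_le_norm_one_add_pow_apply n (T f)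
    rw [hstep, Nat.cast_succ]
    nlinarith [hT.norm_sq_add_norm_sq_le v, norm_nonneg (T f), hgrow, ih]

theorem IsAccretive.tendsto_norm_one_add_pow_apply_atTop (hT : T.IsAccretive) {f : E}
    (hf : T f ≠ 0) : Tendsto (fun n : ℕ => ‖((1 + T) ^ n) f‖) atTop atTop := by
  have hsq : Tendsto (fun n : ℕ => ‖((1 + T) ^ n) f‖ ^ 2) atTop atTop := by
    refine tendsto_atTop_mono (fun n => hT.norm_sq_add_mul_le_norm_one_add_pow_apply_sq f n) ?_
    exact tendsto_atTop_add_const_left _ _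
      (tendsto_natCast_atTop_atTop.atTop_mul_const (by positivity))
  refine (Real.tendsto_sqrt_atTop.comp hsq).congr fun n => ?_
  simp [Real.sqrt_sq (norm_nonneg _)]

end ContinuousLinearMap

section Primitive

variable {μ : Measure ℝ} {E : Type*} [NormedAddCommGroup E] [NormedSpace ℝ E] {f : ℝ → E}

theorem continuous_setIntegral_Iic [NullSingletonClass μ] (hf : Integrable f μ) :
    Continuous fun x => ∫ t in Iic x, f t ∂μ := by
  have hsplit : (fun x => ∫ t in Iic x, f t ∂μ) =
      fun x => (∫ t in Iic 0, f t ∂μ) + ∫ t in (0 : ℝ)..x, f t ∂μ := by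
    ext x
    rw [← intervalIntegral.integral_Iic_sub_Iic hf.integrableOn hf.integrableOn, add_sub_cancel]
  rw [hsplit]
  exact continuous_const.add
    (intervalIntegral.continuous_primitive (fun _ _ => hf.intervalIntegrable) 0)

theorem tendsto_setIntegral_Iic_atTop (hf : Integrable f μ) :
    Tendsto (fun x => ∫ t in Iic x, f t ∂μ) atTop (𝓝 (∫ t, f t ∂μ)) := by
  have hlim := tendsto_setIntegral_of_monotone (μ := μ) (fun x : ℝ => measurableSet_Iic)
    (fun _ _ hxy => Iic_subset_Iic.mpr hxy) hf.integrableOn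
  rwa [iUnion_Iic, setIntegral_univ] at hlim

theorem ae_eq_zero_of_forall_setIntegral_Iic_eq_zero [CompleteSpace E] (hf : Integrable f μ)
    (h : ∀ x, ∫ t in Iic x, f t ∂μ = 0) : f =ᵐ[μ] 0 := by
  suffices ∀ s, MeasurableSet s → ∫ t in s, f t ∂μ = 0 from
    hf.ae_eq_zero_of_forall_setIntegral_eq_zero fun s hs _ => this s hs
  have htotal : ∫ t, f t ∂μ = 0 :=
    tendsto_nhds_unique (tendsto_setIntegral_Iic_atTop hf) <| by
      simp only [h]
      exact tendsto_const_nhds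
  intro s hs
  induction s, hs using MeasurableSpace.induction_on_inter
    (BorelSpace.measurable_eq.trans (borel_eq_generateFrom_Iic ℝ)) isPiSystem_Iic with
  | empty => simp
  | basic t ht => obtain ⟨x, rfl⟩ := ht; exact h x
  | compl t ht iht =>
    rw [setIntegral_compl ht hf, iht, htotal, sub_zero]
  | iUnion g hdisj hmeas ihg =>
    rw [integral_iUnion hmeas hdisj hf.integrableOn]
    simp [ihg]

theorem integral_setIntegral_Iic_swap [SFinite μ] {F : ℝ → ℝ → E}
    (hF : Integrable (Function.uncurry F) (μ.prod μ)) :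
    ∫ x, ∫ t in Iic x, F x t ∂μ ∂μ = ∫ t, ∫ x in Ici t, F x t ∂μ ∂μ := by
  have hS : MeasurableSet {p : ℝ × ℝ | p.2 ≤ p.1} :=
    measurableSet_le measurable_snd measurable_fst
  simp only [← integral_indicator measurableSet_Iic, ← integral_indicator measurableSet_Ici]
  exact integral_integral_swap (hF.indicator hS)

end Primitive

open ComplexConjugate

theorem two_mul_re_integral_conj_mul_setIntegral_Iic {μ : Measure ℝ} [SFinite μ]
    [NullSingletonClass μ] {g : ℝ → ℂ} (hg : Integrable g μ) :
    2 * (∫ x, conj (g x) * ∫ t in Iic x, g t ∂μ ∂μ).re = ‖∫ x, g x ∂μ‖ ^ 2 := by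
  set P : ℝ → ℂ := fun x => ∫ t in Iic x, g t ∂μ
  suffices key : (∫ x, conj (g x) * P x ∂μ) + conj (∫ x, conj (g x) * P x ∂μ)
      = conj (∫ x, g x ∂μ) * ∫ x, g x ∂μ by
    have hre := congrArg Complex.re key
    rwa [Complex.add_conj, ← Complex.normSq_eq_conj_mul_self, Complex.ofReal_re,
      Complex.ofReal_re, Complex.normSq_eq_norm_sq] at hre
  have hconj : Integrable (fun x => conj (g x)) μ :=
    Complex.conjCLE.toContinuousLinearMap.integrable_comp hg
  have hP : Integrable (fun x => conj (g x) * P x) μ :=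
    hconj.mul_bdd (continuous_setIntegral_Iic hg).aestronglyMeasurable <| ae_of_all _ fun x =>
      (norm_integral_le_integral_norm _).trans <|
        setIntegral_le_integral hg.norm (ae_of_all _ fun _ => norm_nonneg _)
  have hIci : ∀ t, ∫ x in Ici t, g x ∂μ = (∫ x, g x ∂μ) - P t := fun t => by
    rw [← compl_Iio, setIntegral_compl measurableSet_Iio hg, ← integral_Iic_eq_integral_Iio]
  -- the two triangles `t ≤ x` and `x ≤ t` cover the square and meet in the null diagonal
  have hswap : conj (∫ x, conj (g x) * P x ∂μ)
      = ∫ t, conj (g t) * ((∫ x, g x ∂μ) - P t) ∂μ := by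
    calc conj (∫ x, conj (g x) * P x ∂μ)
        = ∫ x, ∫ t in Iic x, g x * conj (g t) ∂μ ∂μ := by
          simp only [← integral_conj, map_mul, Complex.conj_conj, P, integral_const_mul]
      _ = ∫ t, ∫ x in Ici t, g x * conj (g t) ∂μ ∂μ :=
          integral_setIntegral_Iic_swap (hg.mul_prod hconj)
      _ = ∫ t, conj (g t) * ((∫ x, g x ∂μ) - P t) ∂μ := by
          simp only [integral_mul_const, hIci, mul_comm]
  simp only [hswap, mul_sub]
  rw [integral_sub (hconj.mul_const _) hP, integral_mul_const, integral_conj]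
  ring

theorem isAccretive_of_ae_eq_setIntegral_Iic {μ : Measure ℝ} [IsFiniteMeasure μ]
    [NullSingletonClass μ] {V : Lp ℂ 2 μ →L[ℂ] Lp ℂ 2 μ}
    (hV : ∀ f, V f =ᵐ[μ] fun x => ∫ t in Iic x, f t ∂μ) : V.IsAccretive := by
  intro u
  have hu : Integrable u μ := (Lp.memLp u).integrable one_le_two
  have hinner : ⟪u, V u⟫_ℂ = ∫ x, conj (u x) * ∫ t in Iic x, u t ∂μ ∂μ := by
    rw [L2.inner_def]
    exact integral_congr_ae ((hV u).mono fun x hx => by simp only [RCLike.inner_apply', hx])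
  have hre := two_mul_re_integral_conj_mul_setIntegral_Iic hu
  rw [← hinner] at hre
  rw [RCLike.re_to_complex]
  linarith [sq_nonneg ‖∫ x, u x ∂μ‖]

instance : IsFiniteMeasure μ01 := by unfold μ01; infer_instance

instance : NullSingletonClass μ01 := by unfold μ01; infer_instance

theorem μ01_restrict_Icc_zero (x : ℝ) : μ01.restrict (Icc 0 x) = μ01.restrict (Iic x) := by
  unfold μ01
  rw [Measure.restrict_restrict measurableSet_Icc, Measure.restrict_restrict measurableSet_Iic]
  congr 1
  ext t
  simp only [mem_inter_iff, mem_Icc, mem_Iic]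
  tauto

theorem μ01_Iic_of_neg {x : ℝ} (hx : x < 0) : μ01 (Iic x) = 0 := by
  unfold μ01
  rw [Measure.restrict_apply measurableSet_Iic,
    (eq_empty_of_forall_notMem fun t ht => (ht.1.trans_lt hx).not_ge ht.2.1 :
      Iic x ∩ Icc 0 1 = ∅), measure_empty]

theorem μ01_restrict_Iic_of_one_le {x : ℝ} (hx : 1 ≤ x) : μ01.restrict (Iic x) = μ01 := by
  refine Measure.restrict_eq_self_of_ae_mem ?_
  unfold μ01
  exact (ae_restrict_mem measurableSet_Icc).mono fun t ht => ht.2.trans hx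

theorem setIntegral_Iic_μ01_eq_zero_of_ae {E : Type*} [NormedAddCommGroup E] [NormedSpace ℝ E]
    {f : ℝ → E} (hf : Integrable f μ01) (h : ∀ᵐ x ∂μ01, ∫ t in Iic x, f t ∂μ01 = 0)
    (x : ℝ) :
    ∫ t in Iic x, f t ∂μ01 = 0 := by
  have h01 : EqOn (fun x => ∫ t in Iic x, f t ∂μ01) 0 (Icc 0 1) :=
    Measure.eqOn_Icc_of_ae_eq volume zero_ne_one (by unfold μ01 at h; exact h)
      (continuous_setIntegral_Iic hf).continuousOn continuousOn_const
  rcases lt_or_ge x 0 with hx0 | hx0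
  · exact setIntegral_measure_zero _ (μ01_Iic_of_neg hx0)
  rcases le_or_gt x 1 with hx1 | hx1
  · exact h01 ⟨hx0, hx1⟩
  · rw [μ01_restrict_Iic_of_one_le hx1.le, ← μ01_restrict_Iic_of_one_le le_rfl]
    exact h01 ⟨zero_le_one, le_rfl⟩

theorem apply_ne_zero_of_ae_eq_setIntegral_Iic {V : Lp ℂ 2 μ01 →L[ℂ] Lp ℂ 2 μ01}
    (hV : ∀ f, V f =ᵐ[μ01] fun x => ∫ t in Iic x, f t ∂μ01) {f : Lp ℂ 2 μ01}
    (hf : f ≠ 0) : V f ≠ 0 := by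
  intro hVf
  have hfi : Integrable f μ01 := (Lp.memLp f).integrable one_le_two
  have hVf0 : (V f : ℝ → ℂ) =ᵐ[μ01] 0 := by rw [hVf]; exact Lp.coeFn_zero _ _ _
  have hprim : ∀ᵐ x ∂μ01, ∫ t in Iic x, f t ∂μ01 = 0 := (hV f).symm.trans hVf0
  exact hf <| Lp.eq_zero_iff_ae_eq_zero.mpr <| ae_eq_zero_of_forall_setIntegral_Iic_eq_zero hfi
    (setIntegral_Iic_μ01_eq_zero_of_ae hfi hprim)

/-- If `V` is the Volterra operator on `L²([0,1], ℂ)`, then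
`‖(I + V)ⁿ f‖ → ∞` for every nonzero `f ∈ L²`. -/
theorem stmt_18
    (V : MeasureTheory.Lp ℂ 2 μ01 →L[ℂ] MeasureTheory.Lp ℂ 2 μ01)
    (hV : ∀ f : MeasureTheory.Lp ℂ 2 μ01,
      ∀ᵐ x ∂μ01, (V f : ℝ → ℂ) x = ∫ t in Set.Icc (0 : ℝ) x, f t ∂μ01) :
    ∀ f : MeasureTheory.Lp ℂ 2 μ01, f ≠ 0 →
      Filter.Tendsto (fun n : ℕ => ‖((1 + V) ^ n) f‖) Filter.atTop Filter.atTop := by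
  have hV' : ∀ f, V f =ᵐ[μ01] fun x => ∫ t in Iic x, f t ∂μ01 := fun f =>
    (hV f).mono fun x hx => by rw [hx, μ01_restrict_Icc_zero]
  intro f hf
  exact (isAccretive_of_ae_eq_setIntegral_Iic hV').tendsto_norm_one_add_pow_apply_atTop
    (apply_ne_zero_of_ae_eq_setIntegral_Iic hV' hf)
end
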